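/- arXiv:2403.10196 — 6 statements merged into one kernel-verified Lean document; each statement's English description precedes it below -/
import Mathlib

section
/- Let Γ be a compact subset of Euclidean ℝⁿ, let δ > 0, and let m ∈ ℕ be such that Γ is not contained in the closed δ-neighbourhood of any m-dimensional linear subspace of ℝⁿ (i.e., for every m-dimensional subspace P there exists x ∈ Γ with dist(x, P) ≥ δ). Then there exist points x₁, …, x_{m+1} ∈ Γ such that MinHeight(x₁,…,x_{m+1}) ≥ δ, where MinHeight(a₁,…,a_k) := min over j of dist(a_j, span(a₁,…,â_j,…,a_k)). -/
open scoped RealInnerProductSpace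
open MeasureTheory

noncomputable section

abbrev E (n : ℕ) := EuclideanSpace ℝ (Fin n)

def wedge {n : ℕ} (v w : E n) : Matrix (Fin n) (Fin n) ℝ :=
  Matrix.of fun i j => v i * w j - w i * v j

def innerL {n : ℕ} (A B : Matrix (Fin n) (Fin n) ℝ) : ℝ :=
  (1 / 2) * ∑ i, ∑ j, A i j * B i j

def normL {n : ℕ} (A : Matrix (Fin n) (Fin n) ℝ) : ℝ := Real.sqrt (innerL A A)

def minHeight {n k : ℕ} (a : Fin k → E n) : ℝ :=
  ⨅ j, Metric.infDist (a j) (↑(Submodule.span ℝ (a '' {i | i ≠ j})) : Set (E n))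

/-!
The Gram determinant `G(x₁, …, x_k) = det (⟪x_i, x_l⟫)` factors, for every `j`, as
`dist(x_j, span of the others)² * G(the others)`. Since the span of at most `m` points lies in
an `m`-dimensional subspace, there is always a point of `Γ` at distance `≥ δ` from it. Adding such
points one at a time gives a tuple in `Γ^(m+1)` with `G ≥ δ^(2(m+1)) > 0`, so a maximiser `x` of
`G` on the compact set `Γ^(m+1)` has `G(x) > 0`. Replacing `x_j` by a point at distance `≥ δ` from
the span of the others cannot increase `G`, and by the factorization this forces
`dist(x_j, span of the others) ≥ δ`.
-/

open Matrix Metric Module Set Submodule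

theorem Submodule.exists_le_finrank_eq {K V : Type*} [DivisionRing K] [AddCommGroup V] [Module K V]
    [Module.Finite K V] (W : Submodule K V) {m : ℕ} (hWm : finrank K W ≤ m)
    (hm : m ≤ finrank K V) : ∃ P : Submodule K V, W ≤ P ∧ finrank K P = m := by
  obtain ⟨d, rfl⟩ := Nat.exists_eq_add_of_le hWm
  induction d generalizing W with
  | zero => exact ⟨W, le_rfl, rfl⟩
  | succ d ih =>
    have hW : W ≠ ⊤ := fun hW => by
      rw [hW, finrank_top] at hm
      omega
    obtain ⟨v, -, hv⟩ := SetLike.exists_of_lt hW.lt_top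
    obtain ⟨P, hWP, hP⟩ := ih (W ⊔ span K {v}) (by rw [finrank_sup_span_singleton hv]; omega)
      (by rw [finrank_sup_span_singleton hv]; omega)
    exact ⟨P, le_sup_left.trans hWP, by rw [hP, finrank_sup_span_singleton hv]; omega⟩

variable {F : Type*} [NormedAddCommGroup F] [InnerProductSpace ℝ F]

theorem Submodule.infDist_eq_norm_sub_starProjection {𝕜 V : Type*} [RCLike 𝕜]
    [NormedAddCommGroup V] [InnerProductSpace 𝕜 V] (K : Submodule 𝕜 V) [K.HasOrthogonalProjection]
    (y : V) : infDist y K = ‖y - K.starProjection y‖ := by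
  rw [infDist_eq_iInf, starProjection_minimal]
  simp only [dist_eq_norm]
  rfl

theorem Matrix.gram_sum_smul {ι : Type*} [Fintype ι] (M : Matrix ι ι ℝ) (b : ι → F) :
    gram ℝ (fun i => ∑ l, M i l • b l) = M * gram ℝ b * Mᵀ := by
  ext i i'
  simp only [gram_apply, mul_apply, transpose_apply, sum_inner, inner_sum, real_inner_smul_left,
    real_inner_smul_right, Finset.sum_mul]
  exact Finset.sum_congr rfl fun _ _ => Finset.sum_congr rfl fun _ _ => by ring

theorem Matrix.det_one_updateRow {ι R : Type*} [Fintype ι] [DecidableEq ι] [CommRing R] (j : ι)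
    (v : ι → R) : ((1 : Matrix ι ι R).updateRow j v).det = v j := by
  have hv : v = ∑ l, v l • (1 : Matrix ι ι R) l := by
    simpa only [← one_apply] using pi_eq_sum_univ v
  rw [hv, det_updateRow_sum, det_one, smul_eq_mul, mul_one, ← hv]

theorem det_gram_insertNth_add_sum_smul {k : ℕ} (j : Fin (k + 1)) (u : F) (c : Fin k → ℝ)
    (a : Fin k → F) :
    (gram ℝ (j.insertNth (u + ∑ i, c i • a i) a)).det = (gram ℝ (j.insertNth u a)).det := by
  set M : Matrix (Fin (k + 1)) (Fin (k + 1)) ℝ := (1 : Matrix _ _ ℝ).updateRow j (j.insertNth 1 c)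
  have hM : j.insertNth (u + ∑ i, c i • a i) a =
      fun r => ∑ s, M r s • (j.insertNth u a : Fin (k + 1) → F) s := by
    ext r : 1
    refine j.succAboveCases ?_ (fun i => ?_) r
    · simp [M, Fin.sum_univ_succAbove _ j]
    · simp [M, one_apply]
  rw [hM, gram_sum_smul, det_mul, det_mul, det_transpose, det_one_updateRow]
  simp

theorem det_gram_insertNth_of_inner_eq_zero {k : ℕ} (j : Fin (k + 1)) {u : F} {a : Fin k → F}
    (hu : ∀ i, ⟪u, a i⟫ = 0) :
    (gram ℝ (j.insertNth u a)).det = ‖u‖ ^ 2 * (gram ℝ a).det := by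
  rw [det_succ_row _ j, Finset.sum_eq_single j]
  · have : (gram ℝ (j.insertNth u a)).submatrix j.succAbove j.succAbove = gram ℝ a := by
      ext; simp
    simp [this]
  · intro l _ hl
    obtain ⟨i, rfl⟩ := Fin.exists_succAbove_eq hl
    simp [hu]
  · simp

theorem det_gram_insertNth {k : ℕ} (j : Fin (k + 1)) (y : F) (a : Fin k → F) :
    (gram ℝ (j.insertNth y a)).det = infDist y (span ℝ (range a)) ^ 2 * (gram ℝ a).det := by
  set K := span ℝ (range a)
  have : FiniteDimensional ℝ K := .span_of_finite ℝ (finite_range a)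
  obtain ⟨c, hc⟩ := (mem_span_range_iff_exists_fun ℝ).1 (K.starProjection_apply_mem y)
  have hu : ∀ i, ⟪y - K.starProjection y, a i⟫ = 0 := fun i =>
    K.inner_left_of_mem_orthogonal (subset_span ⟨i, rfl⟩) (K.sub_starProjection_mem_orthogonal y)
  rw [K.infDist_eq_norm_sub_starProjection, ← det_gram_insertNth_of_inner_eq_zero j hu,
    ← det_gram_insertNth_add_sum_smul j (y - K.starProjection y) c, hc, sub_add_cancel]

theorem continuous_det_gram {ι : Type*} [Fintype ι] [DecidableEq ι] :
    Continuous fun a : ι → F => (gram ℝ a).det :=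
  (continuous_matrix fun i l => (continuous_apply i).inner (continuous_apply l)).matrix_det

theorem sq_mul_det_gram_le_det_gram_insertNth {k : ℕ} (j : Fin (k + 1)) {a : Fin k → F} {y : F}
    {δ : ℝ} (hδ : 0 ≤ δ) (hy : δ ≤ infDist y (span ℝ (range a))) :
    δ ^ 2 * (gram ℝ a).det ≤ (gram ℝ (j.insertNth y a)).det := by
  rw [det_gram_insertNth]
  gcongr
  exact (posSemidef_gram ℝ a).det_nonneg

theorem exists_le_infDist_of_finrank_le [FiniteDimensional ℝ F] {Γ : Set F} {m : ℕ} {δ : ℝ}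
    (hm : m ≤ finrank ℝ F)
    (h : ∀ P : Submodule ℝ F, finrank ℝ P = m → ∃ x ∈ Γ, δ ≤ infDist x (P : Set F))
    (W : Submodule ℝ F) (hW : finrank ℝ W ≤ m) : ∃ x ∈ Γ, δ ≤ infDist x (W : Set F) := by
  obtain ⟨P, hWP, hP⟩ := W.exists_le_finrank_eq hW hm
  obtain ⟨x, hxΓ, hx⟩ := h P hP
  exact ⟨x, hxΓ, hx.trans (infDist_le_infDist_of_subset hWP ⟨0, W.zero_mem⟩)⟩

theorem exists_pow_le_det_gram {Γ : Set F} {m : ℕ} {δ : ℝ} (hδ : 0 ≤ δ)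
    (hfar : ∀ W : Submodule ℝ F, finrank ℝ W ≤ m → ∃ y ∈ Γ, δ ≤ infDist y (W : Set F))
    {k : ℕ} (hk : k ≤ m + 1) :
    ∃ z : Fin k → F, (∀ i, z i ∈ Γ) ∧ δ ^ (2 * k) ≤ (gram ℝ z).det := by
  induction k with
  | zero => exact ⟨Fin.elim0, fun i => i.elim0, by simp⟩
  | succ k ih =>
    obtain ⟨z, hzΓ, hz⟩ := ih (by omega)
    have hzm : finrank ℝ (span ℝ (range z)) ≤ m :=
      (finrank_range_le_card z).trans (by rw [Fintype.card_fin]; omega)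
    obtain ⟨y, hyΓ, hy⟩ := hfar _ hzm
    refine ⟨Fin.cons y z, Fin.cases hyΓ hzΓ, ?_⟩
    calc δ ^ (2 * (k + 1)) = δ ^ 2 * δ ^ (2 * k) := by ring
      _ ≤ δ ^ 2 * (gram ℝ z).det := by gcongr
      _ ≤ (gram ℝ (Fin.cons y z)).det := by
        rw [← Fin.insertNth_zero']
        exact sq_mul_det_gram_le_det_gram_insertNth 0 hδ hy

theorem le_infDist_of_isMaxOn_det_gram {Γ : Set F} {m : ℕ} {δ : ℝ} (hδ : 0 ≤ δ)
    (hfar : ∀ W : Submodule ℝ F, finrank ℝ W ≤ m → ∃ y ∈ Γ, δ ≤ infDist y (W : Set F))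
    {x : Fin (m + 1) → F} (hxΓ : x ∈ univ.pi fun _ => Γ)
    (hmax : IsMaxOn (fun a => (gram ℝ a).det) (univ.pi fun _ => Γ) x)
    (hpos : 0 < (gram ℝ x).det) (j : Fin (m + 1)) :
    δ ≤ infDist (x j) (span ℝ (range (j.removeNth x))) := by
  set a := j.removeNth x
  obtain ⟨y, hyΓ, hy⟩ := hfar _ ((finrank_range_le_card a).trans (by simp))
  have hx : (gram ℝ x).det = infDist (x j) (span ℝ (range a)) ^ 2 * (gram ℝ a).det := by
    rw [← det_gram_insertNth j, Fin.insertNth_self_removeNth]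
  have ha : 0 < (gram ℝ a).det := pos_of_mul_pos_right (hx ▸ hpos) (sq_nonneg _)
  have hyx : j.insertNth y a ∈ univ.pi fun _ => Γ := by
    intro i _
    refine j.succAboveCases ?_ (fun i => ?_) i
    · simpa using hyΓ
    · simpa [a, Fin.removeNth] using hxΓ _ trivial
  have hle : δ ^ 2 * (gram ℝ a).det ≤ infDist (x j) (span ℝ (range a)) ^ 2 * (gram ℝ a).det :=
    (sq_mul_det_gram_le_det_gram_insertNth j hδ hy).trans (hx ▸ hmax hyx)
  exact (pow_le_pow_iff_left₀ hδ infDist_nonneg two_ne_zero).1 (le_of_mul_le_mul_right hle ha)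

theorem le_minHeight {n k : ℕ} {x : Fin (k + 1) → E n} {δ : ℝ}
    (h : ∀ j, δ ≤ infDist (x j) (span ℝ (range (j.removeNth x)))) : δ ≤ minHeight x := by
  refine le_ciInf fun j => ?_
  have : x '' {i | i ≠ j} = range (j.removeNth x) := by
    rw [show j.removeNth x = x ∘ j.succAbove from rfl, range_comp, Fin.range_succAbove]
    rfl
  simpa [this] using h j

/-- If a compact `Γ ⊆ ℝⁿ` is not contained in the closed `δ`-neighbourhood
of any `m`-dimensional subspace, then some `(m+1)`-tuple of points of `Γ` has
minimal height at least `δ`. -/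
theorem stmt_3 (n m : ℕ) (hm : m ≤ n) (Γ : Set (E n)) (hΓ : IsCompact Γ)
    (δ : ℝ) (hδ : 0 < δ)
    (h : ∀ P : Submodule ℝ (E n), Module.finrank ℝ P = m →
      ∃ x ∈ Γ, δ ≤ Metric.infDist x (P : Set (E n))) :
    ∃ x : Fin (m + 1) → E n, (∀ j, x j ∈ Γ) ∧ δ ≤ minHeight x := by
  have hfar := exists_le_infDist_of_finrank_le (by rwa [finrank_euclideanSpace_fin]) h
  obtain ⟨z, hzΓ, hz⟩ := exists_pow_le_det_gram hδ.le hfar le_rfl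
  have hzΓ' : z ∈ univ.pi fun _ => Γ := fun i _ => hzΓ i
  obtain ⟨x, hxΓ, hmax⟩ :=
    (isCompact_univ_pi fun _ => hΓ).exists_isMaxOn ⟨z, hzΓ'⟩ continuous_det_gram.continuousOn
  have hpos : 0 < (gram ℝ x).det := (pow_pos hδ _).trans_le (hz.trans (hmax hzΓ'))
  exact ⟨x, fun j => hxΓ j trivial,
    le_minHeight fun j => le_infDist_of_isMaxOn_det_gram hδ.le hfar hxΓ hmax hpos j⟩
end
end

section
/- Let a₁, …, a_m be vectors in Euclidean ℝⁿ with MinHeight(a₁,…,a_m) > 0. Then a₁,…,a_m are linearly independent, and every w ∈ span(a₁,…,a_m) can be written uniquely as w = λ₁a₁ + ⋯ + λ_m a_m with |λ_j| ≤ ‖w‖ / MinHeight(a₁,…,a_m) for every j ∈ {1,…,m}. -/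
/-!
If `w = ∑ cᵢ aᵢ` with `cⱼ ≠ 0`, then `aⱼ - cⱼ⁻¹ w` lies in the span of the other `aᵢ`, so
`‖w‖ / |cⱼ| ≥ d(aⱼ, span(aᵢ : i ≠ j)) ≥ MinHeight`. For `w = 0` this forces every `cⱼ = 0`,
which is linear independence, and linear independence gives uniqueness.
-/

open scoped RealInnerProductSpace
open MeasureTheory

noncomputable section

open Metric

theorem norm_mul_infDist_span_le_norm_sum {𝕜 V ι : Type*} [NormedField 𝕜]
    [SeminormedAddCommGroup V] [NormedSpace 𝕜 V] [Fintype ι] (a : ι → V) (c : ι → 𝕜) (j : ι) :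
    ‖c j‖ * infDist (a j) (Submodule.span 𝕜 (a '' {i | i ≠ j})) ≤ ‖∑ i, c i • a i‖ := by
  classical
  rcases eq_or_ne (c j) 0 with hcj | hcj
  · simp [hcj]
  set r := ∑ i ∈ Finset.univ.erase j, c i • a i
  have hsum : ∑ i, c i • a i = c j • a j + r :=
    (Finset.add_sum_erase _ _ (Finset.mem_univ j)).symm
  have hr : r ∈ Submodule.span 𝕜 (a '' {i | i ≠ j}) :=
    Submodule.sum_mem _ fun i hi =>
      Submodule.smul_mem _ _ (Submodule.subset_span ⟨i, Finset.ne_of_mem_erase hi, rfl⟩)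
  calc ‖c j‖ * infDist (a j) (Submodule.span 𝕜 (a '' {i | i ≠ j}))
      ≤ ‖c j‖ * dist (a j) ((c j)⁻¹ • -r) := by
        gcongr
        exact infDist_le_dist_of_mem (Submodule.smul_mem _ _ (Submodule.neg_mem _ hr))
    _ = ‖∑ i, c i • a i‖ := by
        rw [dist_eq_norm, ← norm_smul, smul_sub, smul_inv_smul₀ hcj, sub_neg_eq_add, hsum]

theorem minHeight_le_infDist {n k : ℕ} (a : Fin k → E n) (j : Fin k) :
    minHeight a ≤ infDist (a j) (Submodule.span ℝ (a '' {i | i ≠ j})) :=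
  ciInf_le ⟨0, by rintro _ ⟨i, rfl⟩; exact infDist_nonneg⟩ j

theorem abs_le_norm_sum_div_minHeight {n k : ℕ} {a : Fin k → E n} (h : 0 < minHeight a)
    (c : Fin k → ℝ) (j : Fin k) : |c j| ≤ ‖∑ i, c i • a i‖ / minHeight a := by
  rw [le_div_iff₀ h, ← Real.norm_eq_abs]
  exact (mul_le_mul_of_nonneg_left (minHeight_le_infDist a j) (norm_nonneg _)).trans
    (norm_mul_infDist_span_le_norm_sum a c j)

theorem linearIndependent_of_minHeight_pos {n k : ℕ} {a : Fin k → E n} (h : 0 < minHeight a) :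
    LinearIndependent ℝ a :=
  Fintype.linearIndependent_iff.mpr fun c hc j =>
    abs_nonpos_iff.mp (by simpa [hc] using abs_le_norm_sum_div_minHeight h c j)

/-- If `MinHeight(a₁,…,a_m) > 0` then the `aⱼ` are linearly independent and
every `w` in their span is uniquely `w = Σ λⱼ aⱼ` with `|λⱼ| ≤ ‖w‖ / MinHeight`. -/
theorem stmt_4 (n m : ℕ) (a : Fin m → E n) (h : 0 < minHeight a) :
    LinearIndependent ℝ a ∧
    ∀ w ∈ Submodule.span ℝ (Set.range a), ∃ c : Fin m → ℝ,
      w = ∑ j, c j • a j ∧ (∀ j, |c j| ≤ ‖w‖ / minHeight a) ∧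
      ∀ c' : Fin m → ℝ, w = ∑ j, c' j • a j → c' = c := by
  have hli := linearIndependent_of_minHeight_pos h
  refine ⟨hli, fun w hw => ?_⟩
  obtain ⟨c, rfl⟩ := (Submodule.mem_span_range_iff_exists_fun ℝ).mp hw
  refine ⟨c, rfl, abs_le_norm_sum_div_minHeight h c, fun c' hc' => ?_⟩
  funext j
  exact Fintype.linearIndependent_iffₛ.mp hli c' c hc'.symm j
end
end

section
/- If a tuple (x₁,…,x_m) of points of a compact set Γ ⊆ ℝⁿ maximizes the m-dimensional volume vol_m among all m-tuples of points of Γ, with vol_m(x₁,…,x_m) > 0, and x_{m+1} ∈ Γ satisfies dist(x_{m+1}, span(x₁,…,x_m)) ≥ δ, then MinHeight(x₁,…,x_{m+1}) ≥ δ. -/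
open scoped RealInnerProductSpace
open MeasureTheory

noncomputable section

/-- `vol k (a₁,…,a_k)`: the `k`-dimensional Hausdorff measure of the parallelotope
generated by the vectors `a₁,…,a_k`. -/
def vol {n : ℕ} (k : ℕ) (a : Fin k → E n) : ENNReal :=
  μH[(k : ℝ)] {x : E n | ∃ lam : Fin k → ℝ,
    (∀ i, lam i ∈ Set.Icc (0:ℝ) 1) ∧ x = ∑ i, lam i • a i}

/-!
The `k`-dimensional Hausdorff measure of the parallelotope spanned by `a₁,…,a_k` is
`√(det G(a))` times a positive finite constant, `G` the Gram matrix, and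
`det G(v₁,…,v_k,w) = det G(v) · dist(w, span v)²`. Fix `i` and let `a'` be `a` with `aᵢ`
replaced by `b`. Since `(a', aᵢ)` is a reordering of `(a, b)`,
`det G(a') · dist(aᵢ, span a')² = det G(a) · dist(b, span a)²`, and maximality of `a` gives
`det G(a') ≤ det G(a)`, so `dist(aᵢ, span a') ≥ dist(b, span a) ≥ δ`.
-/

section Gram

variable {V : Type*} [NormedAddCommGroup V] [InnerProductSpace ℝ V]

theorem gram_sum_smul {ι κ : Type*} [Fintype ι] (v : ι → V) (T : Matrix ι κ ℝ) :
    Matrix.gram ℝ (fun j => ∑ i, T i j • v i) = T.transpose * Matrix.gram ℝ v * T := by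
  ext j l
  simp only [Matrix.gram_apply, Matrix.mul_apply, Matrix.transpose_apply, sum_inner, inner_sum,
    real_inner_smul_left, real_inner_smul_right, Finset.sum_mul, mul_assoc]
  exact Finset.sum_congr rfl fun _ _ => Finset.sum_congr rfl fun _ _ => by ring

theorem det_gram_comp_equiv {ι κ : Type*} [Fintype ι] [DecidableEq ι] [Fintype κ]
    [DecidableEq κ] (v : ι → V) (e : κ ≃ ι) :
    (Matrix.gram ℝ (v ∘ e)).det = (Matrix.gram ℝ v).det :=
  Matrix.det_submatrix_equiv_self e (Matrix.gram ℝ v)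

theorem det_gram_snoc_of_inner_eq_zero {k : ℕ} (v : Fin k → V) {u : V}
    (hu : ∀ i, ⟪v i, u⟫ = 0) :
    (Matrix.gram ℝ (Fin.snoc v u : Fin (k + 1) → V)).det = (Matrix.gram ℝ v).det * ‖u‖ ^ 2 := by
  have hsub : (Matrix.gram ℝ (Fin.snoc v u : Fin (k + 1) → V)).submatrix Fin.castSucc
      Fin.castSucc = Matrix.gram ℝ v := Matrix.ext fun _ _ => by simp
  rw [Matrix.det_succ_column _ (Fin.last k), Fin.sum_univ_castSucc]
  simp [hu, hsub, mul_comm]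

theorem det_gram_snoc_add_sum_smul {k : ℕ} (v : Fin k → V) (u : V) (c : Fin k → ℝ) :
    (Matrix.gram ℝ (Fin.snoc v (u + ∑ i, c i • v i) : Fin (k + 1) → V)).det =
      (Matrix.gram ℝ (Fin.snoc v u : Fin (k + 1) → V)).det := by
  -- the unitriangular change of vectors `u ↦ u + ∑ cᵢ vᵢ`, so `det T = 1`
  let T : Matrix (Fin (k + 1)) (Fin (k + 1)) ℝ := Matrix.of fun i j =>
    if j = Fin.last k then (Fin.snoc c 1 : Fin (k + 1) → ℝ) i else if i = j then 1 else 0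
  have hT : (Fin.snoc v (u + ∑ i, c i • v i) : Fin (k + 1) → V) =
      fun j => ∑ i, T i j • (Fin.snoc v u : Fin (k + 1) → V) i := by
    funext j
    refine Fin.lastCases ?_ (fun j => ?_) j
    · simp [T, Fin.sum_univ_castSucc, add_comm]
    · simp [T]
  have hTdet : T.det = 1 := by
    rw [Matrix.det_of_isUpperTriangular]
    · simp [T]
    · intro i j (hji : j < i)
      simp [T, (hji.trans_le (Fin.le_last i)).ne, hji.ne']
  rw [hT, gram_sum_smul, Matrix.det_mul, Matrix.det_mul, Matrix.det_transpose, hTdet, one_mul,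
    mul_one]

theorem infDist_eq_norm_sub_starProjection (K : Submodule ℝ V) [K.HasOrthogonalProjection]
    (w : V) : Metric.infDist w (K : Set V) = ‖w - K.starProjection w‖ := by
  rw [K.starProjection_minimal, Metric.infDist_eq_iInf]
  exact iInf_congr fun y => dist_eq_norm _ _

theorem det_gram_snoc {k : ℕ} (v : Fin k → V) (w : V) :
    (Matrix.gram ℝ (Fin.snoc v w : Fin (k + 1) → V)).det =
      (Matrix.gram ℝ v).det * Metric.infDist w (Submodule.span ℝ (Set.range v) : Set V) ^ 2 := by
  set K := Submodule.span ℝ (Set.range v)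
  have : FiniteDimensional ℝ K := FiniteDimensional.span_of_finite ℝ (Set.finite_range v)
  obtain ⟨c, hc⟩ := (Submodule.mem_span_range_iff_exists_fun ℝ).1 (K.starProjection_apply_mem w)
  have horth : ∀ i, ⟪v i, w - K.starProjection w⟫ = 0 := fun i =>
    Submodule.inner_right_of_mem_orthogonal (Submodule.subset_span (Set.mem_range_self i))
      (K.sub_starProjection_mem_orthogonal w)
  have hw : w = (w - K.starProjection w) + ∑ i, c i • v i := by rw [hc, sub_add_cancel]
  conv_lhs => rw [hw]
  rw [det_gram_snoc_add_sum_smul, det_gram_snoc_of_inner_eq_zero v horth,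
    infDist_eq_norm_sub_starProjection]

end Gram

section Volume

variable {V : Type*} [NormedAddCommGroup V] [InnerProductSpace ℝ V] [MeasurableSpace V]
  [BorelSpace V]

theorem hausdorffMeasure_parallelepiped {k : ℕ} (a : Fin k → V) :
    μH[k] (parallelepiped a) = ENNReal.ofReal √(Matrix.gram ℝ a).det *
      μH[k] (parallelepiped (EuclideanSpace.basisFun (Fin k) ℝ)) := by
  set b := EuclideanSpace.basisFun (Fin k) ℝ
  set f := b.toBasis.constr ℝ a
  have hfb : (fun i => f (b i)) = a := funext fun i => by simp [f, b]
  have hdet : f.normDet = √(Matrix.gram ℝ a).det := by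
    rw [← Real.sqrt_sq f.normDet_nonneg, ← hfb]
    exact congrArg _ (f.normDet_sq_eq_det_gram b)
  rw [← hdet, ← hfb, ← Function.comp_def, ← image_parallelepiped]
  simpa using f.hausdorffMeasure_image (parallelepiped b)

theorem hausdorffMeasure_parallelepiped_basisFun_pos (k : ℕ) :
    0 < μH[k] (parallelepiped (EuclideanSpace.basisFun (Fin k) ℝ)) :=
  Measure.measure_pos_of_nonempty_interior _
    (EuclideanSpace.basisFun (Fin k) ℝ).toBasis.parallelepiped.interior_nonempty

theorem hausdorffMeasure_parallelepiped_basisFun_lt_top (k : ℕ) :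
    μH[k] (parallelepiped (EuclideanSpace.basisFun (Fin k) ℝ)) < ⊤ :=
  (EuclideanSpace.basisFun (Fin k) ℝ).toBasis.parallelepiped.isCompact.measure_lt_top

theorem hausdorffMeasure_parallelepiped_le_iff {k : ℕ} (a b : Fin k → V) :
    μH[k] (parallelepiped a) ≤ μH[k] (parallelepiped b) ↔
      (Matrix.gram ℝ a).det ≤ (Matrix.gram ℝ b).det := by
  rw [hausdorffMeasure_parallelepiped a, hausdorffMeasure_parallelepiped b,
    ENNReal.mul_le_mul_iff_left (hausdorffMeasure_parallelepiped_basisFun_pos k).ne'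
      (hausdorffMeasure_parallelepiped_basisFun_lt_top k).ne,
    ENNReal.ofReal_le_ofReal_iff (Real.sqrt_nonneg _),
    Real.sqrt_le_sqrt_iff (Matrix.posSemidef_gram ℝ b).det_nonneg]

theorem hausdorffMeasure_parallelepiped_pos_iff {k : ℕ} (a : Fin k → V) :
    0 < μH[k] (parallelepiped a) ↔ 0 < (Matrix.gram ℝ a).det := by
  rw [hausdorffMeasure_parallelepiped a, CanonicallyOrderedAdd.mul_pos, ENNReal.ofReal_pos,
    Real.sqrt_pos]
  exact and_iff_left (hausdorffMeasure_parallelepiped_basisFun_pos k)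

end Volume

theorem vol_eq_hausdorffMeasure_parallelepiped {n k : ℕ} (a : Fin k → E n) :
    vol k a = μH[k] (parallelepiped a) := by
  unfold vol
  congr 1
  ext x
  simp [mem_parallelepiped_iff, Pi.le_def, forall_and]

section Snoc

variable {α : Type*}

theorem Fin.snoc_update_eq_comp_swap {m : ℕ} (a : Fin m → α) (b : α) (i : Fin m) :
    (Fin.snoc (Function.update a i b) (a i) : Fin (m + 1) → α) =
      Fin.snoc a b ∘ Equiv.swap i.castSucc (Fin.last m) := by
  funext j
  refine Fin.lastCases ?_ (fun j => ?_) j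
  · simp
  · rcases eq_or_ne j i with rfl | hji
    · simp
    · simp [Function.update_of_ne hji, Equiv.swap_apply_of_ne_of_ne
        (Fin.castSucc_injective m |>.ne hji) (Fin.castSucc_lt_last j).ne]

theorem Fin.snoc_image_ne_last {m : ℕ} (a : Fin m → α) (b : α) :
    (Fin.snoc a b : Fin (m + 1) → α) '' {j | j ≠ Fin.last m} = Set.range a := by
  have : {j | j ≠ Fin.last m} = Set.range Fin.castSucc :=
    Set.ext fun _ => Fin.exists_castSucc_eq.symm
  rw [this, ← Set.range_comp, Fin.snoc_comp_castSucc]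

theorem Fin.snoc_image_ne_castSucc {m : ℕ} (a : Fin m → α) (b : α) (i : Fin m) :
    (Fin.snoc a b : Fin (m + 1) → α) '' {j | j ≠ i.castSucc} =
      Set.range (Function.update a i b) := by
  have : {j | j ≠ i.castSucc} = Equiv.swap i.castSucc (Fin.last m) '' {j | j ≠ Fin.last m} := by
    ext j
    simp [Equiv.image_eq_preimage_symm, Equiv.swap_apply_eq_iff]
  rw [this, ← Set.image_comp, ← Fin.snoc_update_eq_comp_swap, Fin.snoc_image_ne_last]

end Snoc

theorem infDist_span_le_infDist_span_update {V : Type*} [NormedAddCommGroup V]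
    [InnerProductSpace ℝ V] {m : ℕ} (a : Fin m → V) (b : V) (i : Fin m)
    (hpos : 0 < (Matrix.gram ℝ a).det)
    (hle : (Matrix.gram ℝ (Function.update a i b)).det ≤ (Matrix.gram ℝ a).det) :
    Metric.infDist b (Submodule.span ℝ (Set.range a) : Set V) ≤
      Metric.infDist (a i) (Submodule.span ℝ (Set.range (Function.update a i b)) : Set V) := by
  have key := det_gram_snoc (Function.update a i b) (a i)
  rw [Fin.snoc_update_eq_comp_swap, det_gram_comp_equiv, det_gram_snoc] at key
  have hsq : Metric.infDist b (Submodule.span ℝ (Set.range a) : Set V) ^ 2 ≤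
      Metric.infDist (a i) (Submodule.span ℝ (Set.range (Function.update a i b)) : Set V) ^ 2 :=
    le_of_mul_le_mul_left (key ▸ mul_le_mul_of_nonneg_right hle (sq_nonneg _)) hpos
  exact (pow_le_pow_iff_left₀ Metric.infDist_nonneg Metric.infDist_nonneg two_ne_zero).1 hsq

theorem stmt_5_general (n m : ℕ) (Γ : Set (E n)) (δ : ℝ)
    (a : Fin m → E n) (ha : ∀ j, a j ∈ Γ)
    (hmax : ∀ b : Fin m → E n, (∀ j, b j ∈ Γ) → vol m b ≤ vol m a)
    (hpos : 0 < vol m a) (b : E n) (hb : b ∈ Γ)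
    (hdist : δ ≤ Metric.infDist b (↑(Submodule.span ℝ (Set.range a)) : Set (E n))) :
    δ ≤ minHeight (Fin.snoc a b) := by
  simp only [vol_eq_hausdorffMeasure_parallelepiped, hausdorffMeasure_parallelepiped_le_iff,
    hausdorffMeasure_parallelepiped_pos_iff] at hmax hpos
  refine le_ciInf fun j => Fin.lastCases ?_ (fun i => ?_) j
  · rwa [Fin.snoc_image_ne_last, Fin.snoc_last]
  · rw [Fin.snoc_image_ne_castSucc, Fin.snoc_castSucc]
    have hmem : ∀ j, Function.update a i b j ∈ Γ :=
      (Function.forall_update_iff a (fun _ x => x ∈ Γ)).2 ⟨hb, fun j _ => ha j⟩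
    exact hdist.trans (infDist_span_le_infDist_span_update a b i hpos (hmax _ hmem))

/-- a volume-maximizing `m`-tuple in `Γ` together with a point of `Γ` at
distance `≥ δ` from its span has minimal height `≥ δ`. -/
theorem stmt_5 (n m : ℕ) (Γ : Set (E n)) (hΓ : IsCompact Γ) (δ : ℝ)
    (a : Fin m → E n) (ha : ∀ j, a j ∈ Γ)
    (hmax : ∀ b : Fin m → E n, (∀ j, b j ∈ Γ) → vol m b ≤ vol m a)
    (hpos : 0 < vol m a) (b : E n) (hb : b ∈ Γ)
    (hdist : δ ≤ Metric.infDist b (↑(Submodule.span ℝ (Set.range a)) : Set (E n))) :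
    δ ≤ minHeight (Fin.snoc a b) :=
  stmt_5_general n m Γ δ a ha hmax hpos b hb hdist
end
end

section
/- Let A ⊆ ℝᵈ be a Borel set and ψ : A → ℝ a Lipschitz function. Then the d-dimensional Hausdorff measure of the graph gr ψ := {(x, ψ(x)) : x ∈ A} ⊆ ℝ^{d+1} satisfies H^d(gr ψ) ≤ (Lip(ψ) + 1) · H^d(A). -/
/-!
Extend `ψ` to a Lipschitz function on `ℝᵈ`. By Rademacher's theorem it is differentiable off a
null set, whose image under the Lipschitz map `x ↦ (x, ψ x)` is null. The set of
differentiability points splits into countably many measurable pieces on each of which `ψ` is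
`ε`-close to a linear functional `ℓ` with `‖ℓ‖ ≤ Lip ψ`; there the graph map is the linear map
`x ↦ (x, ℓ x)` followed by a `(1 + ε)`-Lipschitz map, and the linear map scales `H^d` by
`√(1 + ‖ℓ‖²) ≤ 1 + Lip ψ` (a rank-one update of the identity in its Gram matrix). Summing gives
`H^d(gr ψ) ≤ (1 + ε)^d (Lip ψ + 1) H^d(A)`; let `ε → 0`.
-/

open scoped RealInnerProductSpace
open MeasureTheory

noncomputable section

instance (d : ℕ) : MeasurableSpace (WithLp 2 (E d × ℝ)) := borel _

instance (d : ℕ) : BorelSpace (WithLp 2 (E d × ℝ)) := ⟨rfl⟩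

open scoped NNReal ENNReal
open Module Filter Topology

lemma tsum_measure_inter_le {α : Type*} [MeasurableSpace α] (μ : Measure α) (A : Set α)
    {t : ℕ → Set α} (ht : ∀ n, MeasurableSet (t n)) (hdisj : Pairwise (Function.onFun Disjoint t)) :
    ∑' n, μ (A ∩ t n) ≤ μ A :=
  -- `μ.restrict A` is countably additive on the `t n` even when `A` is not measurable.
  calc ∑' n, μ (A ∩ t n) = μ.restrict A (⋃ n, t n) := by
        simp only [measure_iUnion hdisj ht, Measure.restrict_apply (ht _), Set.inter_comm]
    _ ≤ μ.restrict A Set.univ := measure_mono (Set.subset_univ _)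
    _ = μ A := Measure.restrict_apply_univ A

lemma ENNReal.le_of_forall_pos_le_one_add_rpow_mul {a b : ℝ≥0∞} {d : ℝ}
    (h : ∀ ε : ℝ≥0, 0 < ε → a ≤ ((1 + ε : ℝ≥0) : ℝ≥0∞) ^ d * b) : a ≤ b := by
  have hlim : Tendsto (fun ε : ℝ≥0 => ((1 + ε : ℝ≥0) : ℝ≥0∞) ^ d * b) (𝓝[>] 0) (𝓝 b) := by
    have hcont : Continuous fun ε : ℝ≥0 => ((1 + ε : ℝ≥0) : ℝ≥0∞) ^ d :=
      ENNReal.continuous_rpow_const.comp (ENNReal.continuous_coe.comp (continuous_const_add 1))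
    have := (hcont.tendsto 0).mono_left (nhdsWithin_le_nhds (s := Set.Ioi 0))
    simp only [add_zero, ENNReal.coe_one, ENNReal.one_rpow] at this
    simpa using ENNReal.Tendsto.mul_const this (Or.inl one_ne_zero)
  exact ge_of_tendsto hlim (eventually_nhdsWithin_of_forall h)

theorem ApproximatesLinearOn.hausdorffMeasure_image_le {𝕜 X Y : Type*}
    [NontriviallyNormedField 𝕜] [NormedAddCommGroup X] [NormedSpace 𝕜 X]
    [NormedAddCommGroup Y] [NormedSpace 𝕜 Y] [MeasurableSpace Y] [BorelSpace Y]
    {f : X → Y} {T : X →L[𝕜] Y} {s : Set X} {ε : ℝ≥0} (hf : ApproximatesLinearOn f T s ε)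
    (hT : ∀ x, ‖x‖ ≤ ‖T x‖) {d : ℝ} (hd : 0 ≤ d) :
    μH[d] (f '' s) ≤ ((1 + ε : ℝ≥0) : ℝ≥0∞) ^ d * μH[d] (T '' s) := by
  have hinj : Function.Injective T := (injective_iff_map_eq_zero T).2 fun x hx =>
    norm_le_zero_iff.1 ((hT x).trans_eq (by rw [hx, norm_zero]))
  -- On `s`, `f` factors through `T` via a `(1 + ε)`-Lipschitz map on `T '' s`.
  have himage : f '' s = (f ∘ Function.invFun T) '' (T '' s) := by
    rw [Set.image_image]
    simp only [Function.comp_apply, Function.leftInverse_invFun hinj _]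
  have hlip : LipschitzOnWith (1 + ε) (f ∘ Function.invFun T) (T '' s) := by
    refine LipschitzOnWith.of_dist_le_mul ?_
    rintro _ ⟨x, hx, rfl⟩ _ ⟨y, hy, rfl⟩
    simp only [Function.comp_apply, Function.leftInverse_invFun hinj _, dist_eq_norm, ← map_sub]
    calc ‖f x - f y‖ = ‖T (x - y) + (f x - f y - T (x - y))‖ := by rw [add_sub_cancel]
      _ ≤ ‖T (x - y)‖ + ε * ‖x - y‖ := norm_add_le_of_le le_rfl (hf x hx y hy)
      _ ≤ ‖T (x - y)‖ + ε * ‖T (x - y)‖ := by gcongr; exact hT _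
      _ = ↑(1 + ε) * ‖T (x - y)‖ := by push_cast; ring
  rw [himage]
  exact hlip.hausdorffMeasure_image_le hd

section Graph

variable {U : Type*} [NormedAddCommGroup U]

def graphMap (φ : U → ℝ) (x : U) : WithLp 2 (U × ℝ) := WithLp.toLp 2 (x, φ x)

lemma lipschitzWith_graphMap {φ : U → ℝ} {K : ℝ≥0} (h : LipschitzWith K φ) :
    LipschitzWith (K + 1) (graphMap φ) := by
  have hfst : LipschitzWith 1 fun x : U => WithLp.toLp 2 (x, (0 : ℝ)) :=
    LipschitzWith.of_dist_le_mul fun x y => by simp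
  have hsnd : LipschitzWith K fun x : U => WithLp.toLp 2 ((0 : U), φ x) :=
    LipschitzWith.of_dist_le_mul fun x y => by
      rw [dist_eq_norm, ← WithLp.toLp_sub, Prod.mk_sub_mk, sub_zero, WithLp.norm_toLp_snd,
        ← dist_eq_norm]
      exact h.dist_le_mul x y
  have hsplit : graphMap φ =
      (fun x : U => WithLp.toLp 2 (x, (0 : ℝ))) + fun x => WithLp.toLp 2 ((0 : U), φ x) := by
    funext x
    rw [WithLp.ext_iff]
    ext <;> simp [graphMap]
  rw [add_comm, hsplit]
  exact hfst.add hsnd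

variable [NormedSpace ℝ U]

def graphCLM (ℓ : U →L[ℝ] ℝ) : U →L[ℝ] WithLp 2 (U × ℝ) :=
  (WithLp.prodContinuousLinearEquiv 2 ℝ U ℝ).symm.toContinuousLinearMap ∘L
    (ContinuousLinearMap.id ℝ U).prod ℓ

@[simp]
lemma graphCLM_apply (ℓ : U →L[ℝ] ℝ) (x : U) : graphCLM ℓ x = graphMap ℓ x := rfl

lemma norm_le_norm_graphCLM (ℓ : U →L[ℝ] ℝ) (x : U) : ‖x‖ ≤ ‖graphCLM ℓ x‖ :=
  WithLp.norm_fst_le (x := graphCLM ℓ x)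

lemma approximatesLinearOn_graphMap {φ : U → ℝ} {ℓ : U →L[ℝ] ℝ} {s : Set U} {ε : ℝ≥0}
    (h : ApproximatesLinearOn φ ℓ s ε) : ApproximatesLinearOn (graphMap φ) (graphCLM ℓ) s ε := by
  intro x hx y hy
  have hsub : graphMap φ x - graphMap φ y - graphCLM ℓ (x - y) =
      WithLp.toLp 2 (0, φ x - φ y - ℓ (x - y)) := by
    rw [WithLp.ext_iff]
    ext <;> simp [graphMap]
  rw [hsub, WithLp.norm_toLp_snd]
  exact h x hx y hy

end Graph

section Hausdorff

variable {U : Type*} [NormedAddCommGroup U] [InnerProductSpace ℝ U]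

lemma inner_graphMap_graphMap (ℓ : U →L[ℝ] ℝ) (x y : U) :
    ⟪graphMap ℓ x, graphMap ℓ y⟫ = ⟪x, y⟫ + ℓ x * ℓ y := by
  simp [graphMap, WithLp.prod_inner_apply, mul_comm]

variable [FiniteDimensional ℝ U]

lemma normDet_graphCLM (ℓ : U →L[ℝ] ℝ) :
    (graphCLM ℓ : U →ₗ[ℝ] WithLp 2 (U × ℝ)).normDet = √(1 + ‖ℓ‖ ^ 2) := by
  set b := stdOrthonormalBasis ℝ U
  set v := (InnerProductSpace.toDual ℝ U).symm ℓ
  have hv : ∀ x, ℓ x = ⟪v, x⟫ := fun x => InnerProductSpace.toDual_symm_apply.symm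
  have hgram : Matrix.gram ℝ (fun i => (graphCLM ℓ : U →ₗ[ℝ] WithLp 2 (U × ℝ)) (b i)) =
      1 + Matrix.replicateCol Unit (fun i => ℓ (b i)) *
        Matrix.replicateRow Unit (fun i => ℓ (b i)) := by
    ext i j
    change ⟪graphMap ℓ (b i), graphMap ℓ (b j)⟫ = _
    rw [inner_graphMap_graphMap, b.inner_eq_ite]
    simp [Matrix.one_apply, Matrix.mul_apply]
  have hsum : (fun i => ℓ (b i)) ⬝ᵥ (fun i => ℓ (b i)) = ‖ℓ‖ ^ 2 := by
    rw [← (InnerProductSpace.toDual ℝ U).symm.norm_map ℓ, ← real_inner_self_eq_norm_sq,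
      ← b.sum_inner_mul_inner]
    simp only [dotProduct, hv, real_inner_comm, v]
  have hsq := (graphCLM ℓ : U →ₗ[ℝ] WithLp 2 (U × ℝ)).normDet_sq_eq_det_gram b
  rw [hgram, Matrix.det_one_add_replicateCol_mul_replicateRow, hsum] at hsq
  simp only [RCLike.ofReal_real_eq_id, id] at hsq
  rw [← hsq, Real.sqrt_sq (LinearMap.normDet_nonneg _)]

variable [MeasurableSpace U] [BorelSpace U] [MeasurableSpace (WithLp 2 (U × ℝ))]
  [BorelSpace (WithLp 2 (U × ℝ))]

lemma hausdorffMeasure_image_graphCLM_le (ℓ : U →L[ℝ] ℝ) (s : Set U) :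
    μH[finrank ℝ U] (graphCLM ℓ '' s) ≤ (‖ℓ‖₊ + 1) * μH[finrank ℝ U] s := by
  rw [← ContinuousLinearMap.coe_coe, LinearMap.hausdorffMeasure_image, normDet_graphCLM]
  gcongr
  rw [ENNReal.ofReal_le_iff_le_toReal (by simp), Real.sqrt_le_left (by positivity)]
  simp only [ENNReal.toReal_add ENNReal.coe_ne_top ENNReal.one_ne_top, ENNReal.coe_toReal,
    coe_nnnorm, ENNReal.toReal_one]
  nlinarith [norm_nonneg ℓ]

theorem ApproximatesLinearOn.hausdorffMeasure_image_graphMap_le {φ : U → ℝ} {ℓ : U →L[ℝ] ℝ}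
    {K ε : ℝ≥0} {s : Set U} (hφ : ApproximatesLinearOn φ ℓ s ε) (hℓ : ‖ℓ‖₊ ≤ K) :
    μH[finrank ℝ U] (graphMap φ '' s) ≤
      ((1 + ε : ℝ≥0) : ℝ≥0∞) ^ (finrank ℝ U : ℝ) * ((K + 1) * μH[finrank ℝ U] s) :=
  calc μH[finrank ℝ U] (graphMap φ '' s)
      ≤ ((1 + ε : ℝ≥0) : ℝ≥0∞) ^ (finrank ℝ U : ℝ) * μH[finrank ℝ U] (graphCLM ℓ '' s) :=
        (approximatesLinearOn_graphMap hφ).hausdorffMeasure_image_le (norm_le_norm_graphCLM ℓ)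
          (by positivity)
    _ ≤ ((1 + ε : ℝ≥0) : ℝ≥0∞) ^ (finrank ℝ U : ℝ) * ((‖ℓ‖₊ + 1) * μH[finrank ℝ U] s) := by
        gcongr
        exact hausdorffMeasure_image_graphCLM_le ℓ s
    _ ≤ _ := by gcongr

theorem LipschitzWith.hausdorffMeasure_image_graphMap_inter_differentiableAt_le {φ : U → ℝ}
    {K : ℝ≥0} (hφ : LipschitzWith K φ) (A : Set U) {ε : ℝ≥0} (hε : 0 < ε) :
    μH[finrank ℝ U] (graphMap φ '' (A ∩ {x | DifferentiableAt ℝ φ x})) ≤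
      ((1 + ε : ℝ≥0) : ℝ≥0∞) ^ (finrank ℝ U : ℝ) * ((K + 1) * μH[finrank ℝ U] A) := by
  set s := {x | DifferentiableAt ℝ φ x}
  obtain ⟨t, L, t_disj, t_meas, s_sub, t_approx, t_deriv⟩ :=
    exists_partition_approximatesLinearOn_of_hasFDerivWithinAt φ s (fderiv ℝ φ)
      (fun x hx => hx.hasFDerivAt.hasFDerivWithinAt) (fun _ => ε) (fun _ => hε.ne')
  have hpiece : ∀ n, μH[finrank ℝ U] (graphMap φ '' (A ∩ (s ∩ t n))) ≤
      ((1 + ε : ℝ≥0) : ℝ≥0∞) ^ (finrank ℝ U : ℝ) *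
        ((K + 1) * μH[finrank ℝ U] (A ∩ (s ∩ t n))) := by
    intro n
    rcases (A ∩ (s ∩ t n)).eq_empty_or_nonempty with hempty | ⟨x, hx⟩
    · simp [hempty]
    obtain ⟨y, -, hy⟩ := t_deriv ⟨x, hx.2.1⟩ n
    refine ((t_approx n).mono_set Set.inter_subset_right).hausdorffMeasure_image_graphMap_le ?_
    rw [hy, ← NNReal.coe_le_coe, coe_nnnorm]
    exact norm_fderiv_le_of_lipschitz ℝ hφ
  have hcover : A ∩ s ⊆ ⋃ n, A ∩ (s ∩ t n) := fun x hx => by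
    obtain ⟨n, hn⟩ := Set.mem_iUnion.1 (s_sub hx.2)
    exact Set.mem_iUnion.2 ⟨n, hx.1, hx.2, hn⟩
  calc μH[finrank ℝ U] (graphMap φ '' (A ∩ s))
      ≤ ∑' n, μH[finrank ℝ U] (graphMap φ '' (A ∩ (s ∩ t n))) := by
        refine (measure_mono (Set.image_mono hcover)).trans ?_
        rw [Set.image_iUnion]
        exact measure_iUnion_le _
    _ ≤ ∑' n, ((1 + ε : ℝ≥0) : ℝ≥0∞) ^ (finrank ℝ U : ℝ) *
          ((K + 1) * μH[finrank ℝ U] (A ∩ (s ∩ t n))) := ENNReal.tsum_le_tsum hpiece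
    _ ≤ _ := by
        rw [ENNReal.tsum_mul_left, ENNReal.tsum_mul_left]
        gcongr
        exact tsum_measure_inter_le _ A (fun n => (measurableSet_of_differentiableAt ℝ φ).inter
          (t_meas n)) fun m n hmn => (t_disj hmn).mono Set.inter_subset_right Set.inter_subset_right

theorem LipschitzWith.hausdorffMeasure_image_graphMap_le {φ : U → ℝ} {K : ℝ≥0}
    (hφ : LipschitzWith K φ) (A : Set U) :
    μH[finrank ℝ U] (graphMap φ '' A) ≤ (K + 1) * μH[finrank ℝ U] A := by
  set s := {x | DifferentiableAt ℝ φ x}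
  have hnull : μH[finrank ℝ U] (graphMap φ '' (A \ s)) = 0 := by
    have hA_null : μH[finrank ℝ U] (A \ s) = 0 := measure_mono_null
      (Set.sdiff_subset_compl A s) (ae_iff.1 (hφ.ae_differentiableAt (μ := μH[finrank ℝ U])))
    refine le_antisymm ?_ zero_le
    calc μH[finrank ℝ U] (graphMap φ '' (A \ s))
        ≤ ((K + 1 : ℝ≥0) : ℝ≥0∞) ^ (finrank ℝ U : ℝ) * μH[finrank ℝ U] (A \ s) :=
          (lipschitzWith_graphMap hφ).hausdorffMeasure_image_le (by positivity) _
      _ = 0 := by rw [hA_null, mul_zero]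
  refine ENNReal.le_of_forall_pos_le_one_add_rpow_mul (d := finrank ℝ U) fun ε hε => ?_
  calc μH[finrank ℝ U] (graphMap φ '' A)
      ≤ μH[finrank ℝ U] (graphMap φ '' (A \ s)) + μH[finrank ℝ U] (graphMap φ '' (A ∩ s)) := by
        conv_lhs => rw [← Set.sdiff_union_inter A s, Set.image_union]
        exact measure_union_le _ _
    _ ≤ _ := by
        rw [hnull, zero_add]
        exact hφ.hausdorffMeasure_image_graphMap_inter_differentiableAt_le A hε

end Hausdorff

theorem stmt_6_general (d : ℕ) (A : Set (E d))
    (ψ : E d → ℝ) (K : NNReal) (hψ : LipschitzOnWith K ψ A) :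
    μH[(d : ℝ)] {p : WithLp 2 (E d × ℝ) |
        (WithLp.equiv 2 (E d × ℝ) p).1 ∈ A ∧
        (WithLp.equiv 2 (E d × ℝ) p).2 = ψ (WithLp.equiv 2 (E d × ℝ) p).1} ≤
      ((K : ENNReal) + 1) * μH[(d : ℝ)] A := by
  obtain ⟨φ, hφ, hψφ⟩ := hψ.extend_real
  have hgraph : {p : WithLp 2 (E d × ℝ) |
      (WithLp.equiv 2 (E d × ℝ) p).1 ∈ A ∧
      (WithLp.equiv 2 (E d × ℝ) p).2 = ψ (WithLp.equiv 2 (E d × ℝ) p).1} = graphMap φ '' A := by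
    ext ⟨x, t⟩
    simp only [Set.mem_ofPred_eq, Set.mem_image, graphMap, WithLp.equiv_apply, WithLp.toLp.injEq,
      Prod.mk.injEq]
    constructor
    · rintro ⟨hx, rfl⟩
      exact ⟨x, hx, rfl, (hψφ hx).symm⟩
    · rintro ⟨x, hx, rfl, rfl⟩
      exact ⟨hx, (hψφ hx).symm⟩
  rw [hgraph]
  simpa only [finrank_euclideanSpace_fin] using hφ.hausdorffMeasure_image_graphMap_le A

/-- For a Borel `A ⊆ ℝᵈ` and `ψ : A → ℝ` Lipschitz, the `d`-dimensional
Hausdorff measure of the graph of `ψ` (in `ℝ^{d+1}` with the Euclidean metric, modelled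
as the `L²` product of `E d` and `ℝ`) is at most `(Lip ψ + 1) · H^d(A)`. -/
theorem stmt_6 (d : ℕ) (A : Set (E d)) (hA : MeasurableSet A)
    (ψ : E d → ℝ) (K : NNReal) (hψ : LipschitzOnWith K ψ A) :
    μH[(d : ℝ)] {p : WithLp 2 (E d × ℝ) |
        (WithLp.equiv 2 (E d × ℝ) p).1 ∈ A ∧
        (WithLp.equiv 2 (E d × ℝ) p).2 = ψ (WithLp.equiv 2 (E d × ℝ) p).1} ≤
      ((K : ENNReal) + 1) * μH[(d : ℝ)] A :=
  stmt_6_general d A ψ K hψ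
end
end

section
/- Let ℝⁿ ⊕ Λ²(ℝⁿ) carry an adequate scalar product with induced norm ‖·‖. There exists a constant K₁ > 0 (depending only on n) such that for every (n−1)-tuple (x₁,…,x_{n−1}) in ℝⁿ, every Y ∈ Λ²(ℝⁿ), and every ε > 0 with MinHeight(x₁,…,x_{n−1}) ≥ ε, there exist v₁,…,v_{n−1} ∈ ℝⁿ such that Y = Σ_{j=1}^{n−1} x_j ∧ v_j and ‖v_j‖ ≤ K₁ ‖Y‖ / ε for every j. -/
open scoped RealInnerProductSpace
open MeasureTheory

noncomputable section

/-!
Write `m = n - 1`. Projecting `x k` orthogonally off the span of the other `x j` leaves a vector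
of norm at least `MinHeight ≥ ε`; rescaled, it is a dual vector `u k` in the span `W` of the `x j`,
with `⟪u k, x j⟫ = δ k j` and `‖u k‖ ≤ 1 / ε`. Together with a unit vector `e ⊥ W` (which exists as
`dim W ≤ m < n`) this gives `w = ∑ ⟪u k, w⟫ x k + ⟪e, w⟫ e`, i.e. `1 = ∑ x k ⊗ u k + e ⊗ e`, so
`Y = ∑ x k ⊗ (u k ᵥ* Y) + e ⊗ (e ᵥ* Y)`. As `Y` is skew, `Y e ⊥ e` lies in `W`, which turns the
last term into `∑ c k ⊗ x k`; skew-symmetrizing then gives `Y = ∑ x k ∧ v k` with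
`v k = ½ (⟪u k, Y e⟫ e - Y (u k))`. Both terms are bounded by the Frobenius norm `√2 ‖Y‖` of `Y`
times `‖u k‖ ≤ 1 / ε`, so `K₁ = √2` works.
-/

open Matrix Module Metric Submodule WithLp

section InnerProductSpace

variable {F : Type*} [NormedAddCommGroup F] [InnerProductSpace ℝ F] [FiniteDimensional ℝ F]

theorem sum_inner_smul_eq_of_biorthogonal {ι : Type*} [Fintype ι] [DecidableEq ι]
    {a b : ι → F} (hab : ∀ i j, ⟪b i, a j⟫ = if i = j then 1 else 0)
    (hcard : Fintype.card ι = finrank ℝ F) (w : F) : ∑ i, ⟪b i, w⟫ • a i = w := by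
  have hind : LinearIndependent ℝ a := by
    rw [Fintype.linearIndependent_iff]
    intro g hg k
    simpa [inner_sum, inner_smul_right, hab] using congrArg (⟪b k, ·⟫) hg
  let B := basisOfLinearIndependentOfCardEqFinrank' a hind hcard
  have hrepr : ∀ k, ⟪b k, w⟫ = B.repr w k := by
    intro k
    conv_lhs => rw [← B.sum_repr w]
    simp [B, inner_sum, inner_smul_right, hab]
  simpa [hrepr, B] using B.sum_repr w

theorem exists_inner_eq_ite_of_le_infDist {ι : Type*} [DecidableEq ι]
    (x : ι → F) (k : ι) {ε : ℝ} (hε : 0 < ε)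
    (hk : ε ≤ infDist (x k) (span ℝ (x '' {i | i ≠ k}))) :
    ∃ u ∈ span ℝ (Set.range x), (∀ j, ⟪u, x j⟫ = if k = j then 1 else 0) ∧ ‖u‖ ≤ ε⁻¹ := by
  set K := span ℝ (x '' {i | i ≠ k})
  set h := x k - K.starProjection (x k)
  have hperp : ∀ w ∈ K, ⟪h, w⟫ = 0 := fun w hw => by
    rw [real_inner_comm]; exact K.sub_starProjection_mem_orthogonal (x k) w hw
  have hεh : ε ≤ ‖h‖ := by
    simpa [h, dist_eq_norm] using
      hk.trans (infDist_le_dist_of_mem (K.starProjection_apply_mem (x k)))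
  have hh : ‖h‖ ≠ 0 := (hε.trans_le hεh).ne'
  have hKx : K ≤ span ℝ (Set.range x) := span_mono (Set.image_subset_range _ _)
  refine ⟨(‖h‖ ^ 2)⁻¹ • h, ?_, fun j => ?_, ?_⟩
  · exact smul_mem _ _ (sub_mem (subset_span ⟨k, rfl⟩) (hKx (K.starProjection_apply_mem _)))
  · rw [real_inner_smul_left]
    split_ifs with hkj
    · subst hkj
      have : x k = h + K.starProjection (x k) := by simp [h]
      rw [this, inner_add_right, hperp _ (K.starProjection_apply_mem _), add_zero,
        real_inner_self_eq_norm_sq, inv_mul_cancel₀ (pow_ne_zero 2 hh)]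
    · rw [hperp _ (subset_span ⟨j, Ne.symm hkj, rfl⟩), mul_zero]
  · rw [norm_smul, norm_inv, norm_pow, norm_norm, sq, mul_inv, mul_assoc, inv_mul_cancel₀ hh,
      mul_one]
    exact inv_anti₀ hε hεh

theorem exists_norm_eq_one_mem_orthogonal (K : Submodule ℝ F)
    (hK : finrank ℝ K < finrank ℝ F) : ∃ e ∈ Kᗮ, ‖e‖ = 1 := by
  obtain ⟨v, hv, hv0⟩ := (Submodule.ne_bot_iff Kᗮ).mp fun h => by
    rw [Submodule.orthogonal_eq_bot_iff] at h
    rw [h, finrank_top] at hK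
    exact hK.false
  exact ⟨‖v‖⁻¹ • v, smul_mem _ _ hv, norm_smul_inv_norm hv0⟩

end InnerProductSpace

variable {n m : ℕ}

theorem wedge_eq_vecMulVec_sub (a b : E n) : wedge a b = vecMulVec a b - vecMulVec b a := by
  ext i j; simp [wedge, vecMulVec_apply]

theorem eq_sum_wedge_of_transpose_eq_neg {Y : Matrix (Fin n) (Fin n) ℝ} (hY : Yᵀ = -Y)
    (x b c : Fin m → E n)
    (h : Y = ∑ k, vecMulVec (x k) (b k) + ∑ k, vecMulVec (c k) (x k)) :
    Y = ∑ k, wedge (x k) ((1 / 2 : ℝ) • (b k - c k)) := by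
  have hY2 : Y = (1 / 2 : ℝ) • (Y - Yᵀ) := by rw [hY]; module
  rw [hY2, h]
  simp only [transpose_add, transpose_sum, transpose_vecMulVec, wedge_eq_vecMulVec_sub, ofLp_smul,
    ofLp_sub, vecMulVec_smul, smul_vecMulVec, vecMulVec_sub, sub_vecMulVec, Finset.sum_sub_distrib,
    ← Finset.smul_sum]
  module

theorem one_eq_sum_vecMulVec_of_expansion {x u : Fin m → E n} {e : E n}
    (hexp : ∀ w, ∑ k, ⟪u k, w⟫ • x k + ⟪e, w⟫ • e = w) :
    (1 : Matrix (Fin n) (Fin n) ℝ) = ∑ k, vecMulVec (x k) (u k) + vecMulVec e e := by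
  ext i l
  have := congr(ofLp $(hexp (EuclideanSpace.single l 1)) i)
  simp only [EuclideanSpace.inner_single_right, ofLp_add, ofLp_sum, ofLp_smul, Pi.add_apply,
    Finset.sum_apply, Pi.smul_apply, smul_eq_mul, PiLp.ofLp_single, Pi.single_apply] at this
  simp [Matrix.sum_apply, vecMulVec_apply, one_apply, ← this, mul_comm]

theorem vecMul_eq_neg_mulVec {Y : Matrix (Fin n) (Fin n) ℝ} (hY : Yᵀ = -Y) (w : Fin n → ℝ) :
    w ᵥ* Y = -(Y *ᵥ w) := by
  rw [← mulVec_transpose, hY, neg_mulVec]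

theorem dotProduct_mulVec_self_of_transpose_eq_neg {Y : Matrix (Fin n) (Fin n) ℝ} (hY : Yᵀ = -Y)
    (w : Fin n → ℝ) :
    w ⬝ᵥ Y *ᵥ w = 0 := by
  have h := dotProduct_mulVec w Y w
  rw [vecMul_eq_neg_mulVec hY, neg_dotProduct, dotProduct_comm (Y *ᵥ w)] at h
  linarith

theorem eq_sum_wedge_of_expansion {Y : Matrix (Fin n) (Fin n) ℝ} (hY : Yᵀ = -Y)
    {x u : Fin m → E n} {e : E n} (hexp : ∀ w, ∑ k, ⟪u k, w⟫ • x k + ⟪e, w⟫ • e = w) :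
    Y = ∑ k, wedge (x k)
      ((1 / 2 : ℝ) • (⟪u k, toLp 2 (Y *ᵥ e)⟫ • e - toLp 2 (Y *ᵥ u k))) := by
  set z : E n := toLp 2 (Y *ᵥ e)
  have hz : z = ∑ k, ⟪u k, z⟫ • x k := by
    have hez : ⟪e, z⟫ = 0 := by
      simpa [z, EuclideanSpace.inner_eq_star_dotProduct, dotProduct_comm] using
        dotProduct_mulVec_self_of_transpose_eq_neg hY e
    simpa [hez] using (hexp z).symm
  refine (eq_sum_wedge_of_transpose_eq_neg hY x (fun k => -toLp 2 (Y *ᵥ u k))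
    (fun k => -(⟪u k, z⟫ • e)) ?_).trans (by simp only [neg_sub_neg])
  calc Y = 1 * Y := (one_mul Y).symm
    _ = ∑ k, vecMulVec (x k) (u k ᵥ* Y) + vecMulVec e (e ᵥ* Y) := by
      rw [one_eq_sum_vecMulVec_of_expansion hexp, add_mul, Finset.sum_mul]
      simp only [vecMulVec_mul]
    _ = _ := by
      simp only [vecMul_eq_neg_mulVec hY]
      rw [show Y *ᵥ e.ofLp = z.ofLp from rfl]
      conv_lhs => rw [hz]
      congr 1
      ext i j
      simp [vecMulVec_apply, Matrix.sum_apply, Finset.mul_sum, mul_left_comm]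

theorem sq_sqrt_two_mul_normL (Y : Matrix (Fin n) (Fin n) ℝ) :
    (√2 * normL Y) ^ 2 = ∑ i, ∑ j, Y i j ^ 2 := by
  have h : 0 ≤ innerL Y Y := by simp only [innerL, ← sq]; positivity
  rw [mul_pow, Real.sq_sqrt zero_le_two, normL, Real.sq_sqrt h, innerL]
  simp [sq]

theorem norm_toLp_mulVec_le (Y : Matrix (Fin n) (Fin n) ℝ) (w : E n) :
    ‖toLp 2 (Y *ᵥ w)‖ ≤ √2 * normL Y * ‖w‖ := by
  have hC : 0 ≤ √2 * normL Y := mul_nonneg (Real.sqrt_nonneg _) (Real.sqrt_nonneg _)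
  rw [← pow_le_pow_iff_left₀ (norm_nonneg _) (mul_nonneg hC (norm_nonneg w)) two_ne_zero, mul_pow,
    sq_sqrt_two_mul_normL, EuclideanSpace.norm_sq_eq, EuclideanSpace.norm_sq_eq, Finset.sum_mul]
  refine Finset.sum_le_sum fun i _ => ?_
  simpa [mulVec, dotProduct] using Finset.sum_mul_sq_le_sq_mul_sq Finset.univ (Y i) w

theorem le_infDist_of_le_minHeight {x : Fin m → E n} {ε : ℝ} (h : ε ≤ minHeight x) (j : Fin m) :
    ε ≤ infDist (x j) (span ℝ (x '' {i | i ≠ j})) :=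
  h.trans (ciInf_le ⟨0, by rintro _ ⟨i, rfl⟩; exact infDist_nonneg⟩ j)

theorem exists_sum_wedge_of_le_minHeight (x : Fin m → E (m + 1))
    {Y : Matrix (Fin (m + 1)) (Fin (m + 1)) ℝ} (hY : Yᵀ = -Y) {ε : ℝ} (hε : 0 < ε)
    (hx : ε ≤ minHeight x) :
    ∃ v : Fin m → E (m + 1), Y = ∑ j, wedge (x j) (v j) ∧ ∀ j, ‖v j‖ ≤ √2 * normL Y / ε := by
  set W := span ℝ (Set.range x)
  obtain ⟨e, heW, he⟩ := exists_norm_eq_one_mem_orthogonal W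
    ((finrank_range_le_card x).trans_lt (by simp))
  choose u huW hux hu using fun k =>
    exists_inner_eq_ite_of_le_infDist x k hε (le_infDist_of_le_minHeight hx k)
  have hexp : ∀ w, ∑ k, ⟪u k, w⟫ • x k + ⟪e, w⟫ • e = w := by
    have hxe : ∀ j, ⟪e, x j⟫ = 0 := fun j =>
      W.inner_left_of_mem_orthogonal (subset_span ⟨j, rfl⟩) heW
    have hue : ∀ k, ⟪u k, e⟫ = 0 := fun k => W.inner_right_of_mem_orthogonal (huW k) heW
    intro w
    have := sum_inner_smul_eq_of_biorthogonal (a := fun i : Option (Fin m) => i.elim e x)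
      (b := fun i => i.elim e u) ?_ (by simp) w
    · simpa [Fintype.sum_option, add_comm] using this
    · rintro (_ | i) (_ | j) <;> simp [hxe, hue, hux, he]
  refine ⟨_, eq_sum_wedge_of_expansion hY hexp, fun k => ?_⟩
  have hC : 0 ≤ √2 * normL Y := mul_nonneg (Real.sqrt_nonneg _) (Real.sqrt_nonneg _)
  calc _ ≤ (1 / 2) * (‖u k‖ * ‖toLp 2 (Y *ᵥ e)‖ + ‖toLp 2 (Y *ᵥ u k)‖) := by
        rw [norm_smul, Real.norm_of_nonneg one_half_pos.le]
        gcongr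
        refine (norm_sub_le _ _).trans ?_
        rw [norm_smul, he, mul_one, Real.norm_eq_abs]
        gcongr
        exact abs_real_inner_le_norm _ _
    _ ≤ (1 / 2) * (‖u k‖ * (√2 * normL Y * ‖e‖) + √2 * normL Y * ‖u k‖) := by
        gcongr <;> exact norm_toLp_mulVec_le Y _
    _ = √2 * normL Y * ‖u k‖ := by rw [he]; ring
    _ ≤ √2 * normL Y / ε := by rw [div_eq_mul_inv]; gcongr; exact hu k

/-- there is `K₁ > 0` (depending only on `n`) such that every
`Y ∈ Λ²(ℝⁿ)` (a skew-symmetric matrix) can be written as `Y = Σⱼ xⱼ ∧ vⱼ` with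
`‖vⱼ‖ ≤ K₁‖Y‖/ε`, whenever `MinHeight(x₁,…,x_{n-1}) ≥ ε > 0`. -/
theorem stmt_8 (n : ℕ) :
    ∃ K₁ > (0 : ℝ), ∀ (x : Fin (n - 1) → E n) (Y : Matrix (Fin n) (Fin n) ℝ),
      Y.transpose = -Y → ∀ ε > (0 : ℝ), ε ≤ minHeight x →
      ∃ v : Fin (n - 1) → E n,
        Y = ∑ j, wedge (x j) (v j) ∧ ∀ j, ‖v j‖ ≤ K₁ * normL Y / ε := by
  refine ⟨√2, by positivity, fun x Y hY ε hε hx => ?_⟩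
  cases n with
  | zero => exact ⟨0, Matrix.ext fun i => i.elim0, fun j => j.elim0⟩
  | succ m => exact exists_sum_wedge_of_le_minHeight x hY hε hx
end
end

section
/- Let G be a sub-Finsler free Carnot group of step 2 and rank n with adequate Euclidean norm ‖·‖_eu. There is a constant K (depending only on the norm equivalence constant C₁ between ‖·‖_sf and ‖·‖_eu on ℝⁿ and on the bound M of d_cc(0,·) on the Euclidean unit sphere, namely K = 1 + 2C₁M) such that for every ε > 0, every sub-Finsler geodesic γ : [0,1] → G with γ(0) = 0 and γ(1) on the Euclidean unit sphere, and every linear subspace P ≤ ℝⁿ: if d_eu(π(γ(t)), P) < ε for all t ∈ [0,1], then d_eu(γ(1), P × Λ²(P)) < Kε. -/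
/-!
Project the control `u` of the geodesic orthogonally onto `P`, `u = p u + q u`. The horizontal
curve driven by `p u` ends at a point of `P × Λ²(P)`, which serves as the competitor. With
`x(t) = π(γ(t))`, the endpoints differ by `q x(1)` (of norm `< ε`) in the first layer, and by
`½ ∫ (x ∧ u - p x ∧ p u)` in the second. Writing `x = p x + q x` and integrating the mixed term
`p x ∧ q u` by parts turns the latter into `½ (∫ q x ∧ (u + p u) + p x(1) ∧ q x(1))`, whose norm is
at most `ε L + ε L / 2` where `L = ∫ ‖u‖` is the Euclidean length of `γ`. Finally
`L ≤ C₁ · length_sf(γ) = C₁ d_cc(0, γ(1)) ≤ C₁ M`.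
-/

open scoped RealInnerProductSpace
open MeasureTheory

noncomputable section

abbrev G (n : ℕ) := E n × Matrix (Fin n) (Fin n) ℝ

def gmul {n : ℕ} (g h : G n) : G n := (g.1 + h.1, g.2 + h.2 + (1 / 2 : ℝ) • wedge g.1 h.1)

def ginv {n : ℕ} (g : G n) : G n := (-g.1, -g.2)

def dil {n : ℕ} (t : ℝ) (g : G n) : G n := (t • g.1, (t ^ 2) • g.2)

def normGeu {n : ℕ} (g : G n) : ℝ := Real.sqrt (‖g.1‖ ^ 2 + innerL g.2 g.2)

def distG {n : ℕ} (g h : G n) : ℝ :=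
  Real.sqrt (‖g.1 - h.1‖ ^ 2 + innerL (g.2 - h.2) (g.2 - h.2))

def distSet {n : ℕ} (g : G n) (S : Set (G n)) : ℝ := sInf (distG g '' S)

def wedgeSpan {n : ℕ} (P : Submodule ℝ (E n)) : Submodule ℝ (Matrix (Fin n) (Fin n) ℝ) :=
  Submodule.span ℝ {B | ∃ x ∈ P, ∃ y ∈ P, B = wedge x y}

def curve {n : ℕ} (u : ℝ → E n) (t : ℝ) : G n :=
  (∫ s in (0:ℝ)..t, u s,
   Matrix.of fun i j => (1 / 2 : ℝ) * ∫ s in (0:ℝ)..t, wedge (∫ τ in (0:ℝ)..s, u τ) (u s) i j)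

def dcc {n : ℕ} (N : E n → ℝ) (g h : G n) : ℝ :=
  sInf {L | ∃ u : ℝ → E n, IntervalIntegrable u volume 0 1 ∧
    curve u 1 = gmul (ginv g) h ∧ L = ∫ t in (0:ℝ)..1, N (u t)}

def Abn (n : ℕ) : Set (G n) :=
  {g | ∃ P : Submodule ℝ (E n), Module.finrank ℝ P = n - 2 ∧ g.1 ∈ P ∧ g.2 ∈ wedgeSpan P}

open Set

theorem integral_primitive_mul_add_mul_primitive {f g : ℝ → ℝ} {a b : ℝ}
    (hf : IntervalIntegrable f volume a b) (hg : IntervalIntegrable g volume a b) :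
    ∫ s in a..b, ((∫ τ in a..s, f τ) * g s + f s * ∫ τ in a..s, g τ) =
      (∫ s in a..b, f s) * ∫ s in a..b, g s := by
  have hF := hf.absolutelyContinuousOnInterval_intervalIntegral left_mem_uIcc
  have hG := hg.absolutelyContinuousOnInterval_intervalIntegral left_mem_uIcc
  have hparts := hF.integral_deriv_mul_eq_sub hG
  rw [intervalIntegral.integral_same, zero_mul, sub_zero] at hparts
  rw [← hparts]
  refine intervalIntegral.integral_congr_ae ?_
  filter_upwards [hf.ae_hasDerivAt_integral, hg.ae_hasDerivAt_integral] with s hfs hgs hs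
  have hs' := uIoc_subset_uIcc hs
  rw [(hfs hs' a left_mem_uIcc).deriv, (hgs hs' a left_mem_uIcc).deriv, add_comm]

theorem IntervalIntegrable.continuousLinearMap_comp {F H : Type*} [NormedAddCommGroup F]
    [NormedSpace ℝ F] [NormedAddCommGroup H] [NormedSpace ℝ H] {v : ℝ → F} {a b : ℝ}
    (hv : IntervalIntegrable v volume a b) (L : F →L[ℝ] H) :
    IntervalIntegrable (fun s => L (v s)) volume a b :=
  ⟨L.integrable_comp hv.1, L.integrable_comp hv.2⟩

theorem intervalIntegral_euclidean_apply {ι : Type*} [Fintype ι] {v : ℝ → EuclideanSpace ℝ ι}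
    {a b : ℝ} (hv : IntervalIntegrable v volume a b) (i : ι) :
    (∫ s in a..b, v s) i = ∫ s in a..b, v s i :=
  ((EuclideanSpace.proj i).intervalIntegral_comp_comm hv).symm

section NormEquivalence

variable {V : Type*} [NormedAddCommGroup V] {N : V → ℝ} {C : ℝ}

theorem lipschitzWith_of_subadditive_of_le_mul_norm (hadd : ∀ v w, N (v + w) ≤ N v + N w)
    (hle : ∀ v, N v ≤ C * ‖v‖) : LipschitzWith C.toNNReal N :=
  LipschitzWith.of_le_add_mul' C fun v w =>
    calc N v = N (v - w + w) := by rw [sub_add_cancel]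
      _ ≤ N (v - w) + N w := hadd _ _
      _ ≤ N w + C * dist v w := by rw [dist_eq_norm]; linarith [hle (v - w)]

theorem pos_of_le_mul_norm [Nontrivial V] (hpos : ∀ v, v ≠ 0 → 0 < N v)
    (hle : ∀ v, N v ≤ C * ‖v‖) : 0 < C := by
  obtain ⟨v, hv⟩ := exists_ne (0 : V)
  by_contra! hC
  exact (hpos v hv).not_ge ((hle v).trans (mul_nonpos_of_nonpos_of_nonneg hC (norm_nonneg v)))

theorem IntervalIntegrable.comp_of_subadditive_of_le_mul_norm {u : ℝ → V} {a b : ℝ}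
    (hu : IntervalIntegrable u volume a b) (hN0 : ∀ v, 0 ≤ N v)
    (hadd : ∀ v w, N (v + w) ≤ N v + N w) (hle : ∀ v, N v ≤ C * ‖v‖) :
    IntervalIntegrable (fun t => N (u t)) volume a b :=
  (hu.norm.const_mul C).mono_fun'
    ((lipschitzWith_of_subadditive_of_le_mul_norm hadd hle).continuous.comp_aestronglyMeasurable
      hu.def'.aestronglyMeasurable)
    (Filter.Eventually.of_forall fun t => by
      show ‖N (u t)‖ ≤ C * ‖u t‖
      rw [Real.norm_eq_abs, abs_of_nonneg (hN0 _)]; exact hle _)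

end NormEquivalence

theorem norm_starProjection_orthogonal_eq_infDist {F : Type*} [NormedAddCommGroup F]
    [InnerProductSpace ℝ F] (P : Submodule ℝ F) [P.HasOrthogonalProjection] (v : F) :
    ‖Pᗮ.starProjection v‖ = Metric.infDist v P := by
  rw [Submodule.starProjection_orthogonal_val, Submodule.starProjection_minimal,
    Metric.infDist_eq_iInf]
  simp [dist_eq_norm]

section MatrixGeometry

variable {n : ℕ}

/-- The factor `1/√2` makes `innerL` the pull-back of the Euclidean inner product. -/
def matrixToEuclidean : Matrix (Fin n) (Fin n) ℝ →ₗ[ℝ] EuclideanSpace ℝ (Fin n × Fin n) where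
  toFun A := WithLp.toLp 2 fun p => (√2)⁻¹ * A p.1 p.2
  map_add' A B := by ext; simp [mul_add]
  map_smul' c A := by ext; simp; ring

@[simp]
theorem matrixToEuclidean_apply (A : Matrix (Fin n) (Fin n) ℝ) (p : Fin n × Fin n) :
    matrixToEuclidean A p = (√2)⁻¹ * A p.1 p.2 := rfl

theorem innerL_eq_inner (A B : Matrix (Fin n) (Fin n) ℝ) :
    innerL A B = ⟪matrixToEuclidean A, matrixToEuclidean B⟫ := by
  have h2 : (√2)⁻¹ * (√2)⁻¹ = (1 / 2 : ℝ) := by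
    rw [← mul_inv, Real.mul_self_sqrt zero_le_two, one_div]
  simp only [innerL, matrixToEuclidean_apply, PiLp.inner_apply, RCLike.inner_apply, conj_trivial,
    Fintype.sum_prod_type, Finset.mul_sum]
  refine Finset.sum_congr rfl fun i _ => Finset.sum_congr rfl fun j _ => ?_
  rw [← h2]; ring

theorem normL_eq_norm (A : Matrix (Fin n) (Fin n) ℝ) : normL A = ‖matrixToEuclidean A‖ := by
  rw [normL, innerL_eq_inner, real_inner_self_eq_norm_sq, Real.sqrt_sq (norm_nonneg _)]

theorem normL_nonneg (A : Matrix (Fin n) (Fin n) ℝ) : 0 ≤ normL A := Real.sqrt_nonneg _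

theorem normL_add_le (A B : Matrix (Fin n) (Fin n) ℝ) : normL (A + B) ≤ normL A + normL B := by
  simpa only [normL_eq_norm, map_add] using norm_add_le _ _

theorem normL_smul (c : ℝ) (A : Matrix (Fin n) (Fin n) ℝ) : normL (c • A) = |c| * normL A := by
  rw [normL_eq_norm, normL_eq_norm, map_smul, norm_smul, Real.norm_eq_abs]

theorem distG_le_norm_add_normL (g h : G n) : distG g h ≤ ‖g.1 - h.1‖ + normL (g.2 - h.2) := by
  have hsq : innerL (g.2 - h.2) (g.2 - h.2) = normL (g.2 - h.2) ^ 2 := by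
    rw [normL_eq_norm, innerL_eq_inner, real_inner_self_eq_norm_sq]
  have h1 := norm_nonneg (g.1 - h.1)
  have h2 := normL_nonneg (g.2 - h.2)
  rw [distG, hsq, Real.sqrt_le_iff]
  constructor <;> nlinarith

theorem distSet_le_distG {g h : G n} {S : Set (G n)} (hh : h ∈ S) : distSet g S ≤ distG g h :=
  csInf_le ⟨0, by rintro _ ⟨_, _, rfl⟩; exact Real.sqrt_nonneg _⟩ ⟨h, hh, rfl⟩

theorem nontrivial_of_normGeu_eq_one {g : G n} (h : normGeu g = 1) : Nontrivial (E n) := by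
  rcases n with _ | n
  · simp [normGeu, innerL, Subsingleton.elim g.1 0] at h
  · infer_instance

end MatrixGeometry

section EntrywiseIntegral

variable {ι κ : Type*} {M M' : ℝ → Matrix ι κ ℝ}

def EntrywiseIntegrable (M : ℝ → Matrix ι κ ℝ) : Prop :=
  ∀ i j, IntervalIntegrable (fun s => M s i j) volume 0 1

theorem EntrywiseIntegrable.sub (hM : EntrywiseIntegrable M) (hM' : EntrywiseIntegrable M') :
    EntrywiseIntegrable fun s => M s - M' s :=
  fun i j => (hM i j).sub (hM' i j)

def entrywiseIntegral (M : ℝ → Matrix ι κ ℝ) : Matrix ι κ ℝ :=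
  Matrix.of fun i j => ∫ s in (0 : ℝ)..1, M s i j

theorem entrywiseIntegral_add (hM : EntrywiseIntegrable M) (hM' : EntrywiseIntegrable M') :
    entrywiseIntegral (fun s => M s + M' s) = entrywiseIntegral M + entrywiseIntegral M' := by
  ext i j; exact intervalIntegral.integral_add (hM i j) (hM' i j)

theorem entrywiseIntegral_sub (hM : EntrywiseIntegrable M) (hM' : EntrywiseIntegrable M') :
    entrywiseIntegral (fun s => M s - M' s) = entrywiseIntegral M - entrywiseIntegral M' := by
  ext i j; exact intervalIntegral.integral_sub (hM i j) (hM' i j)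

theorem entrywiseIntegral_congr (h : EqOn M M' (uIcc 0 1)) :
    entrywiseIntegral M = entrywiseIntegral M' := by
  ext i j; exact intervalIntegral.integral_congr fun s hs => congrFun₂ (h hs) i j

variable [Fintype ι] [Fintype κ] [DecidableEq ι] [DecidableEq κ]

theorem map_entrywiseIntegral (φ : Module.Dual ℝ (Matrix ι κ ℝ)) (hM : EntrywiseIntegrable M) :
    φ (entrywiseIntegral M) = ∫ s in (0 : ℝ)..1, φ (M s) := by
  obtain ⟨c, hφ⟩ : ∃ c : ι → κ → ℝ, ∀ A : Matrix ι κ ℝ, φ A = ∑ i, ∑ j, A i j * c i j := by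
    refine ⟨fun i j => φ (Matrix.single i j 1), fun A => ?_⟩
    conv_lhs => rw [Matrix.matrix_eq_sum_single A]
    simp only [map_sum]
    refine Finset.sum_congr rfl fun i _ => Finset.sum_congr rfl fun j _ => ?_
    rw [← smul_eq_mul, ← map_smul, Matrix.smul_single, smul_eq_mul, mul_one]
  simp only [hφ, entrywiseIntegral, Matrix.of_apply]
  have hMc : ∀ i j, IntervalIntegrable (fun s => M s i j * c i j) volume 0 1 :=
    fun i j => (hM i j).mul_const _
  rw [intervalIntegral.integral_finsetSum fun i _ => by
    simpa only [Finset.sum_fn] using IntervalIntegrable.sum Finset.univ fun j _ => hMc i j]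
  refine Finset.sum_congr rfl fun i _ => ?_
  rw [intervalIntegral.integral_finsetSum fun j _ => hMc i j]
  exact Finset.sum_congr rfl fun j _ => (intervalIntegral.integral_mul_const _ _).symm

theorem entrywiseIntegral_mem {S : Submodule ℝ (Matrix ι κ ℝ)} (hM : EntrywiseIntegrable M)
    (hS : ∀ s ∈ uIcc (0 : ℝ) 1, M s ∈ S) : entrywiseIntegral M ∈ S := by
  rw [← Subspace.forall_mem_dualAnnihilator_apply_eq_zero_iff]
  intro φ hφ
  rw [map_entrywiseIntegral φ hM, intervalIntegral.integral_congr fun s hs =>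
    (Submodule.mem_dualAnnihilator φ).1 hφ _ (hS s hs)]
  exact intervalIntegral.integral_zero

end EntrywiseIntegral

section EntrywiseIntegralNorm

variable {n : ℕ}

theorem matrixToEuclidean_entrywiseIntegral {M : ℝ → Matrix (Fin n) (Fin n) ℝ}
    (hM : EntrywiseIntegrable M) :
    matrixToEuclidean (entrywiseIntegral M) = ∫ s in (0 : ℝ)..1, matrixToEuclidean (M s) := by
  ext p
  rw [intervalIntegral.integral_of_le zero_le_one,
    eval_integral_piLp fun q => (hM q.1 q.2).1.const_mul _]
  simp [entrywiseIntegral, intervalIntegral.integral_of_le zero_le_one, integral_const_mul]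

theorem normL_entrywiseIntegral_le {M : ℝ → Matrix (Fin n) (Fin n) ℝ} {b : ℝ → ℝ}
    (hM : EntrywiseIntegrable M) (hb : IntervalIntegrable b volume 0 1)
    (hMb : ∀ s ∈ Icc (0 : ℝ) 1, normL (M s) ≤ b s) :
    normL (entrywiseIntegral M) ≤ ∫ s in (0 : ℝ)..1, b s := by
  rw [normL_eq_norm, matrixToEuclidean_entrywiseIntegral hM]
  refine intervalIntegral.norm_integral_le_of_norm_le zero_le_one
    (Filter.Eventually.of_forall fun s hs => ?_) hb
  rw [← normL_eq_norm]
  exact hMb s (Ioc_subset_Icc_self hs)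

end EntrywiseIntegralNorm

section Wedge

variable {n : ℕ}

theorem wedge_apply (v w : E n) (i j : Fin n) : wedge v w i j = v i * w j - w i * v j := rfl

theorem innerL_wedge_self (v w : E n) :
    innerL (wedge v w) (wedge v w) = ‖v‖ ^ 2 * ‖w‖ ^ 2 - ⟪v, w⟫ ^ 2 := by
  have inner_eq : ∀ a b : E n, ⟪a, b⟫ = ∑ i, a i * b i := fun a b => by
    simp [PiLp.inner_apply, mul_comm]
  have expand : ∀ i j, (v i * w j - w i * v j) * (v i * w j - w i * v j) =
      v i * v i * (w j * w j) + w i * w i * (v j * v j) - 2 * (v i * w i) * (v j * w j) :=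
    fun i j => by ring
  rw [← real_inner_self_eq_norm_sq, ← real_inner_self_eq_norm_sq, inner_eq, inner_eq, inner_eq]
  simp only [innerL, wedge, Matrix.of_apply, expand, Finset.sum_add_distrib,
    Finset.sum_sub_distrib, ← Finset.mul_sum, ← Finset.sum_mul]
  ring

theorem normL_wedge_le (v w : E n) : normL (wedge v w) ≤ ‖v‖ * ‖w‖ := by
  rw [normL, innerL_wedge_self, ← mul_pow]
  exact (Real.sqrt_le_sqrt (sub_le_self _ (sq_nonneg _))).trans_eq (Real.sqrt_sq (by positivity))

theorem wedge_sub_wedge_starProjection (P : Submodule ℝ (E n)) (x u : E n) :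
    wedge x u - wedge (P.starProjection x) (P.starProjection u) =
      wedge (Pᗮ.starProjection x) (u + P.starProjection u) +
        (wedge (P.starProjection x) (Pᗮ.starProjection u) -
          wedge (Pᗮ.starProjection x) (P.starProjection u)) := by
  ext i j
  simp only [Submodule.starProjection_orthogonal_val, wedge_apply, Matrix.sub_apply,
    Matrix.add_apply, PiLp.add_apply, PiLp.sub_apply]
  ring

theorem entrywiseIntegrable_wedge {f g : ℝ → E n} (hf : ContinuousOn f (uIcc 0 1))
    (hg : IntervalIntegrable g volume 0 1) : EntrywiseIntegrable fun s => wedge (f s) (g s) :=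
  fun i j =>
    ((hg.continuousLinearMap_comp (EuclideanSpace.proj j)).continuousOn_mul
        ((EuclideanSpace.proj i).continuous.comp_continuousOn hf)).sub
      ((hg.continuousLinearMap_comp (EuclideanSpace.proj i)).mul_continuousOn
        ((EuclideanSpace.proj j).continuous.comp_continuousOn hf))

theorem entrywiseIntegral_wedge_primitive {v w : ℝ → E n}
    (hv : IntervalIntegrable v volume 0 1) (hw : IntervalIntegrable w volume 0 1) :
    entrywiseIntegral (fun s => wedge (curve v s).1 (w s) - wedge (curve w s).1 (v s)) =
      wedge (curve v 1).1 (curve w 1).1 := by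
  have coord : ∀ {f : ℝ → E n}, IntervalIntegrable f volume 0 1 → ∀ i,
      IntervalIntegrable (fun s => f s i) volume 0 1 :=
    fun hf i => hf.continuousLinearMap_comp (EuclideanSpace.proj i)
  have primitive : ∀ {f : ℝ → E n}, IntervalIntegrable f volume 0 1 → ∀ i, ∀ s ∈ uIcc (0 : ℝ) 1,
      (curve f s).1 i = ∫ τ in (0 : ℝ)..s, f τ i := fun hf i s hs =>
    intervalIntegral_euclidean_apply (hf.mono_set (uIcc_subset_uIcc left_mem_uIcc hs)) i
  have integrable : ∀ {f g : ℝ → ℝ}, IntervalIntegrable f volume 0 1 →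
      IntervalIntegrable g volume 0 1 → IntervalIntegrable
        (fun s => (∫ τ in (0 : ℝ)..s, f τ) * g s + f s * ∫ τ in (0 : ℝ)..s, g τ) volume 0 1 :=
    fun hf hg => (hg.continuousOn_mul (intervalIntegral.continuousOn_primitive_interval' hf
      left_mem_uIcc)).add (hf.mul_continuousOn
        (intervalIntegral.continuousOn_primitive_interval' hg left_mem_uIcc))
  ext i j
  calc entrywiseIntegral (fun s => wedge (curve v s).1 (w s) - wedge (curve w s).1 (v s)) i j
      = ∫ s in (0 : ℝ)..1,
          (((∫ τ in (0 : ℝ)..s, v τ i) * w s j + v s i * ∫ τ in (0 : ℝ)..s, w τ j) -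
            ((∫ τ in (0 : ℝ)..s, w τ i) * v s j + w s i * ∫ τ in (0 : ℝ)..s, v τ j)) :=
        intervalIntegral.integral_congr fun s hs => by
          simp only [Matrix.sub_apply, wedge_apply, primitive hv _ s hs, primitive hw _ s hs]
          ring
    _ = (∫ s in (0 : ℝ)..1, v s i) * (∫ s in (0 : ℝ)..1, w s j) -
          (∫ s in (0 : ℝ)..1, w s i) * (∫ s in (0 : ℝ)..1, v s j) := by
        rw [intervalIntegral.integral_sub (integrable (coord hv i) (coord hw j))
          (integrable (coord hw i) (coord hv j)),
          integral_primitive_mul_add_mul_primitive (coord hv i) (coord hw j),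
          integral_primitive_mul_add_mul_primitive (coord hw i) (coord hv j)]
    _ = _ := by
        simp only [wedge_apply, primitive hv _ 1 right_mem_uIcc, primitive hw _ 1 right_mem_uIcc]

end Wedge

section Curve

variable {n : ℕ} {u : ℝ → E n}

theorem curve_snd_one :
    (curve u 1).2 = (1 / 2 : ℝ) • entrywiseIntegral fun s => wedge (curve u s).1 (u s) := by
  ext i j; simp [curve, entrywiseIntegral]

theorem curve_fst_comp (hu : IntervalIntegrable u volume 0 1) (L : E n →L[ℝ] E n) {s : ℝ}
    (hs : s ∈ uIcc (0 : ℝ) 1) : (curve (fun τ => L (u τ)) s).1 = L (curve u s).1 :=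
  L.intervalIntegral_comp_comm (hu.mono_set (uIcc_subset_uIcc left_mem_uIcc hs))

theorem continuousOn_curve_fst (hu : IntervalIntegrable u volume 0 1) :
    ContinuousOn (fun s => (curve u s).1) (uIcc 0 1) :=
  intervalIntegral.continuousOn_primitive_interval' hu left_mem_uIcc

theorem curve_starProjection_mem (hu : IntervalIntegrable u volume 0 1) (P : Submodule ℝ (E n)) :
    curve (fun s => P.starProjection (u s)) 1 ∈ {g : G n | g.1 ∈ P ∧ g.2 ∈ wedgeSpan P} := by
  have hfst : ∀ s ∈ uIcc (0 : ℝ) 1, (curve (fun τ => P.starProjection (u τ)) s).1 ∈ P :=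
    fun s hs => curve_fst_comp hu _ hs ▸ P.starProjection_apply_mem _
  have hpu := hu.continuousLinearMap_comp P.starProjection
  refine ⟨hfst 1 right_mem_uIcc, ?_⟩
  rw [curve_snd_one]
  exact Submodule.smul_mem _ _ (entrywiseIntegral_mem
    (entrywiseIntegrable_wedge (continuousOn_curve_fst hpu) hpu)
    fun s hs => Submodule.subset_span ⟨_, hfst s hs, _, P.starProjection_apply_mem _, rfl⟩)

theorem curve_snd_sub_curve_starProjection_snd (hu : IntervalIntegrable u volume 0 1)
    (P : Submodule ℝ (E n)) :
    (curve u 1).2 - (curve (fun s => P.starProjection (u s)) 1).2 =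
      (1 / 2 : ℝ) • (entrywiseIntegral (fun s =>
          wedge (Pᗮ.starProjection (curve u s).1) (u s + P.starProjection (u s))) +
        wedge (P.starProjection (curve u 1).1) (Pᗮ.starProjection (curve u 1).1)) := by
  set p := P.starProjection
  set q := Pᗮ.starProjection
  have hx := continuousOn_curve_fst hu
  have hpu := hu.continuousLinearMap_comp p
  have hqu := hu.continuousLinearMap_comp q
  have hpx : ContinuousOn (fun s => p (curve u s).1) (uIcc 0 1) := p.continuous.comp_continuousOn hx
  have hqx : ContinuousOn (fun s => q (curve u s).1) (uIcc 0 1) := q.continuous.comp_continuousOn hx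
  have hparts : entrywiseIntegral (fun s =>
      wedge (p (curve u s).1) (q (u s)) - wedge (q (curve u s).1) (p (u s))) =
        wedge (p (curve u 1).1) (q (curve u 1).1) := by
    rw [← curve_fst_comp hu p right_mem_uIcc, ← curve_fst_comp hu q right_mem_uIcc,
      ← entrywiseIntegral_wedge_primitive hpu hqu]
    exact entrywiseIntegral_congr fun s hs => by
      simp only [curve_fst_comp hu p hs, curve_fst_comp hu q hs]
  calc (curve u 1).2 - (curve (fun s => p (u s)) 1).2
      = (1 / 2 : ℝ) • (entrywiseIntegral (fun s => wedge (curve u s).1 (u s)) -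
          entrywiseIntegral (fun s => wedge (p (curve u s).1) (p (u s)))) := by
        rw [curve_snd_one, curve_snd_one, smul_sub,
          entrywiseIntegral_congr (M := fun s => wedge (curve (fun τ => p (u τ)) s).1 (p (u s)))
            (M' := fun s => wedge (p (curve u s).1) (p (u s)))
            fun s hs => congrArg (wedge · (p (u s))) (curve_fst_comp hu p hs)]
    _ = (1 / 2 : ℝ) • entrywiseIntegral (fun s => wedge (q (curve u s).1) (u s + p (u s)) +
          (wedge (p (curve u s).1) (q (u s)) - wedge (q (curve u s).1) (p (u s)))) := by
        rw [← entrywiseIntegral_sub (entrywiseIntegrable_wedge hx hu)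
          (entrywiseIntegrable_wedge hpx hpu)]
        exact congrArg _ (entrywiseIntegral_congr fun s _ => wedge_sub_wedge_starProjection P _ _)
    _ = (1 / 2 : ℝ) • (entrywiseIntegral (fun s => wedge (q (curve u s).1) (u s + p (u s))) +
          wedge (p (curve u 1).1) (q (curve u 1).1)) := by
        rw [entrywiseIntegral_add (entrywiseIntegrable_wedge hqx (hu.add hpu))
          ((entrywiseIntegrable_wedge hpx hqu).sub (entrywiseIntegrable_wedge hqx hpu)), hparts]

theorem normL_curve_snd_sub_curve_starProjection_snd_le (hu : IntervalIntegrable u volume 0 1)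
    (P : Submodule ℝ (E n)) {ε : ℝ}
    (hq : ∀ t ∈ Icc (0 : ℝ) 1, ‖Pᗮ.starProjection (curve u t).1‖ ≤ ε) :
    normL ((curve u 1).2 - (curve (fun s => P.starProjection (u s)) 1).2) ≤
      ε * (∫ s in (0 : ℝ)..1, ‖u s‖) +
        (∫ s in (0 : ℝ)..1, ‖u s‖) * ‖Pᗮ.starProjection (curve u 1).1‖ / 2 := by
  set S := ∫ s in (0 : ℝ)..1, ‖u s‖
  set p := P.starProjection
  set q := Pᗮ.starProjection
  have hε0 : 0 ≤ ε := (norm_nonneg _).trans (hq 0 (left_mem_Icc.2 zero_le_one))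
  have hp1 : ‖p (curve u 1).1‖ ≤ S := (Submodule.norm_starProjection_apply_le P _).trans
    (intervalIntegral.norm_integral_le_integral_norm zero_le_one)
  have hintegral : normL (entrywiseIntegral fun s => wedge (q (curve u s).1) (u s + p (u s))) ≤
      2 * ε * S := by
    calc _ ≤ ∫ s in (0 : ℝ)..1, ε * (2 * ‖u s‖) :=
          normL_entrywiseIntegral_le (entrywiseIntegrable_wedge
            (q.continuous.comp_continuousOn (continuousOn_curve_fst hu))
            (hu.add (hu.continuousLinearMap_comp p))) ((hu.norm.const_mul 2).const_mul ε)
            fun s hs => (normL_wedge_le _ _).trans (mul_le_mul (hq s hs)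
              ((norm_add_le _ _).trans
                (by linarith [Submodule.norm_starProjection_apply_le P (u s)]))
              (norm_nonneg _) hε0)
      _ = 2 * ε * S := by
        rw [intervalIntegral.integral_const_mul, intervalIntegral.integral_const_mul]; ring
  have hendpoint : normL (wedge (p (curve u 1).1) (q (curve u 1).1)) ≤ S * ‖q (curve u 1).1‖ :=
    (normL_wedge_le _ _).trans (mul_le_mul_of_nonneg_right hp1 (norm_nonneg _))
  rw [curve_snd_sub_curve_starProjection_snd hu P, normL_smul, abs_of_pos one_half_pos]
  linarith [normL_add_le (entrywiseIntegral fun s => wedge (q (curve u s).1) (u s + p (u s)))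
    (wedge (p (curve u 1).1) (q (curve u 1).1))]

end Curve

theorem distSet_curve_lt {n : ℕ} {u : ℝ → E n} (hu : IntervalIntegrable u volume 0 1)
    (P : Submodule ℝ (E n)) {ε : ℝ}
    (hε : ∀ t ∈ Icc (0 : ℝ) 1, Metric.infDist (curve u t).1 P < ε) :
    distSet (curve u 1) {g : G n | g.1 ∈ P ∧ g.2 ∈ wedgeSpan P} <
      (1 + 2 * ∫ s in (0 : ℝ)..1, ‖u s‖) * ε := by
  set S := ∫ s in (0 : ℝ)..1, ‖u s‖
  set p := P.starProjection
  set q := Pᗮ.starProjection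
  have hq : ∀ t ∈ Icc (0 : ℝ) 1, ‖q (curve u t).1‖ < ε := fun t ht => by
    rw [norm_starProjection_orthogonal_eq_infDist]; exact hε t ht
  have hq1 := hq 1 (right_mem_Icc.2 zero_le_one)
  have hS0 : 0 ≤ S := intervalIntegral.integral_nonneg zero_le_one fun _ _ => norm_nonneg _
  have hfst : (curve u 1).1 - (curve (fun s => p (u s)) 1).1 = q (curve u 1).1 := by
    rw [curve_fst_comp hu p right_mem_uIcc, Submodule.starProjection_orthogonal_val]
  have hsnd : normL ((curve u 1).2 - (curve (fun s => p (u s)) 1).2) ≤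
      ε * S + S * ‖q (curve u 1).1‖ / 2 :=
    normL_curve_snd_sub_curve_starProjection_snd_le hu P fun t ht => (hq t ht).le
  calc distSet (curve u 1) {g : G n | g.1 ∈ P ∧ g.2 ∈ wedgeSpan P}
      ≤ distG (curve u 1) (curve (fun s => p (u s)) 1) :=
        distSet_le_distG (curve_starProjection_mem hu P)
    _ ≤ ‖q (curve u 1).1‖ + (ε * S + S * ‖q (curve u 1).1‖ / 2) := by
        have hdist := distG_le_norm_add_normL (curve u 1) (curve (fun s => p (u s)) 1)
        rw [hfst] at hdist
        linarith
    _ < (1 + 2 * S) * ε := by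
        nlinarith [mul_le_mul_of_nonneg_left hq1.le hS0,
          mul_nonneg hS0 ((norm_nonneg _).trans hq1.le)]

theorem stmt_15_general (n : ℕ) (N : E n → ℝ)
    (hN0 : ∀ v, 0 ≤ N v) (hNeq : ∀ v, N v = 0 ↔ v = 0)
    (hNadd : ∀ v w : E n, N (v + w) ≤ N v + N w)
    (C₁ M : ℝ)
    (hC₁ : ∀ v : E n, C₁⁻¹ * ‖v‖ ≤ N v ∧ N v ≤ C₁ * ‖v‖)
    (hM : ∀ g : G n, normGeu g = 1 → dcc N 0 g ≤ M) :
    ∀ ε > (0 : ℝ), ∀ u : ℝ → E n, IntervalIntegrable u volume 0 1 →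
      (∫ t in (0:ℝ)..1, N (u t)) = dcc N 0 (curve u 1) →
      normGeu (curve u 1) = 1 →
      ∀ P : Submodule ℝ (E n),
        (∀ t ∈ Set.Icc (0 : ℝ) 1,
          Metric.infDist ((curve u t).1) (P : Set (E n)) < ε) →
        distSet (curve u 1) {g : G n | g.1 ∈ P ∧ g.2 ∈ wedgeSpan P} <
          (1 + 2 * C₁ * M) * ε := by
  intro ε hε u hu hgeo hunit P hdist
  have := nontrivial_of_normGeu_eq_one hunit
  have hC₁pos : 0 < C₁ := pos_of_le_mul_norm
    (fun v hv => (hN0 v).lt_of_ne' (mt (hNeq v).1 hv)) fun v => (hC₁ v).2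
  have hNu := hu.comp_of_subadditive_of_le_mul_norm hN0 hNadd fun v => (hC₁ v).2
  have hlength : ∫ s in (0 : ℝ)..1, ‖u s‖ ≤ C₁ * M :=
    calc ∫ s in (0 : ℝ)..1, ‖u s‖ ≤ ∫ s in (0 : ℝ)..1, C₁ * N (u s) :=
          intervalIntegral.integral_mono_on zero_le_one hu.norm (hNu.const_mul C₁)
            fun s _ => (inv_mul_le_iff₀ hC₁pos).1 (hC₁ (u s)).1
      _ = C₁ * dcc N 0 (curve u 1) := by rw [intervalIntegral.integral_const_mul, hgeo]
      _ ≤ C₁ * M := mul_le_mul_of_nonneg_left (hM _ hunit) hC₁pos.le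
  calc _ < (1 + 2 * ∫ s in (0 : ℝ)..1, ‖u s‖) * ε := distSet_curve_lt hu P hdist
    _ ≤ (1 + 2 * C₁ * M) * ε := by nlinarith

/-- with `K = 1 + 2C₁M`, if a geodesic from the origin ending on the
Euclidean unit sphere has first-layer projection within distance `ε` of a subspace
`P ≤ ℝⁿ` at all times, then its endpoint is within `Kε` of `P × Λ²(P)`. -/
theorem stmt_15 (n : ℕ) (N : E n → ℝ)
    (hN0 : ∀ v, 0 ≤ N v) (hNeq : ∀ v, N v = 0 ↔ v = 0)
    (hNhom : ∀ (c : ℝ) (v : E n), N (c • v) = |c| * N v)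
    (hNadd : ∀ v w : E n, N (v + w) ≤ N v + N w)
    (C₁ M : ℝ)
    (hC₁ : ∀ v : E n, C₁⁻¹ * ‖v‖ ≤ N v ∧ N v ≤ C₁ * ‖v‖)
    (hM : ∀ g : G n, normGeu g = 1 → dcc N 0 g ≤ M) :
    ∀ ε > (0 : ℝ), ∀ u : ℝ → E n, IntervalIntegrable u volume 0 1 →
      (∫ t in (0:ℝ)..1, N (u t)) = dcc N 0 (curve u 1) →
      normGeu (curve u 1) = 1 →
      ∀ P : Submodule ℝ (E n),
        (∀ t ∈ Set.Icc (0 : ℝ) 1,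
          Metric.infDist ((curve u t).1) (P : Set (E n)) < ε) →
        distSet (curve u 1) {g : G n | g.1 ∈ P ∧ g.2 ∈ wedgeSpan P} <
          (1 + 2 * C₁ * M) * ε :=
  stmt_15_general n N hN0 hNeq hNadd C₁ M hC₁ hM
end
end
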